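/- arXiv:1504.00645 — 5 statements merged into one kernel-verified Lean document; each statement's English description precedes it below -/
import Mathlib

section
/- Let n ≥ 3 be an integer. For every divisor r of n with r ≠ 1, the cyclic subgroup ⟨a^{n/r}⟩ of the dihedral group D_n, regarded as a vertex of the permutability graph of subgroups Γ(D_n), has degree τ(n) + σ(n) − 3; that is, it is adjacent to every other vertex of Γ(D_n). -/
open scoped Pointwise

/-- The permutability graph of non-normal subgroups `Γ_N(G)`: vertices are the
non-normal (hence proper) subgroups of `G`, and two distinct vertices are adjacent
iff the corresponding subgroups permute, i.e. `HK = KH` as subsets of `G`. -/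
def permGraphN (G : Type*) [Group G] :
    SimpleGraph {H : Subgroup G // ¬ H.Normal} where
  Adj H K := H ≠ K ∧ (H.1 : Set G) * (K.1 : Set G) = (K.1 : Set G) * (H.1 : Set G)
  symm := ⟨fun _ _ ⟨hne, h⟩ => ⟨hne.symm, h.symm⟩⟩
  loopless := ⟨fun _ ⟨hne, _⟩ => hne rfl⟩

/-- The permutability graph of subgroups `Γ(G)`: vertices are the proper nontrivial
subgroups of `G`, and two distinct vertices are adjacent iff the corresponding
subgroups permute, i.e. `HK = KH` as subsets of `G`. -/
def permGraph (G : Type*) [Group G] :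
    SimpleGraph {H : Subgroup G // H ≠ ⊥ ∧ H ≠ ⊤} where
  Adj H K := H ≠ K ∧ (H.1 : Set G) * (K.1 : Set G) = (K.1 : Set G) * (H.1 : Set G)
  symm := ⟨fun _ _ ⟨hne, h⟩ => ⟨hne.symm, h.symm⟩⟩
  loopless := ⟨fun _ ⟨hne, _⟩ => hne rfl⟩

namespace Stmt11Aux

open DihedralGroup AddSubgroup

variable {n : ℕ}

lemma inv_r (i : ZMod n) : (r i)⁻¹ = r (-i) :=
  inv_eq_of_mul_eq_one_right (by rw [r_mul_r, add_neg_cancel]; exact one_def.symm)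

lemma inv_sr (i : ZMod n) : (sr i)⁻¹ = sr i :=
  inv_eq_of_mul_eq_one_right (sr_mul_self i)

/-- The subgroup `⟨d⟩` of `ZMod n`. -/
def Φ (n d : ℕ) : AddSubgroup (ZMod n) := AddSubgroup.zmultiples ((d : ZMod n))

lemma card_phi [NeZero n] {d : ℕ} (hd : d ∣ n) : Nat.card (Φ n d) = n / d := by
  rw [Φ, Nat.card_zmultiples, ZMod.addOrderOf_coe d (NeZero.ne n), Nat.gcd_eq_right hd]

lemma phi_injOn [NeZero n] {d e : ℕ} (hd : d ∈ n.divisors) (he : e ∈ n.divisors)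
    (h : Φ n d = Φ n e) : d = e := by
  rw [Nat.mem_divisors] at hd he
  have h1 : n / d = n / e := by rw [← card_phi hd.1, ← card_phi he.1, h]
  have := Nat.div_div_self hd.1 hd.2
  rw [h1, Nat.div_div_self he.1 he.2] at this
  exact this.symm

lemma phi_surj [NeZero n] (A : AddSubgroup (ZMod n)) : ∃ d ∈ n.divisors, Φ n d = A := by
  obtain ⟨a, ha⟩ := Int.subgroup_cyclic (A.comap (Int.castAddHom (ZMod n)))
  rw [← AddSubgroup.zmultiples_eq_closure] at ha
  have hn : (n : ℤ) ∈ A.comap (Int.castAddHom (ZMod n)) := by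
    simp only [AddSubgroup.mem_comap, Int.coe_castAddHom, Int.cast_natCast, ZMod.natCast_self]
    exact A.zero_mem
  rw [ha, Int.mem_zmultiples_iff] at hn
  have ha0 : a ≠ 0 := by
    rintro rfl
    rw [zero_dvd_iff] at hn
    exact_mod_cast NeZero.ne n (by exact_mod_cast hn)
  refine ⟨a.natAbs, Nat.mem_divisors.2 ⟨by simpa using Int.natAbs_dvd_natAbs.2 hn, NeZero.ne n⟩, ?_⟩
  have hmap : A = AddSubgroup.map (Int.castAddHom (ZMod n)) (A.comap (Int.castAddHom (ZMod n))) :=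
    (AddSubgroup.map_comap_eq_self_of_surjective ZMod.intCast_surjective A).symm
  rw [hmap, ha, AddMonoidHom.map_zmultiples]
  have hc : ((Int.castAddHom (ZMod n)) a : ZMod n) = ((a : ℤ) : ZMod n) := rfl
  rcases Int.natAbs_eq a with h | h
  · rw [Φ]
    congr 1
    rw [hc]
    conv_rhs => rw [h]
    rw [Int.cast_natCast]
  · rw [Φ, ← AddSubgroup.zmultiples_neg]
    congr 1
    rw [hc]
    conv_rhs => rw [h]
    rw [Int.cast_neg, Int.cast_natCast]

/-- The additive subgroup of rotation indices of a subgroup of the dihedral group. -/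
def rotA (K : Subgroup (DihedralGroup n)) : AddSubgroup (ZMod n) where
  carrier := {i | DihedralGroup.r i ∈ K}
  zero_mem' := by
    have := K.one_mem
    rwa [one_def] at this
  add_mem' := fun {a b} ha hb => by
    have := K.mul_mem ha hb
    rwa [r_mul_r] at this
  neg_mem' := fun {a} ha => by
    have := K.inv_mem ha
    rwa [inv_r] at this

/-- The purely rotational subgroup corresponding to `A`. -/
def rotSG (A : AddSubgroup (ZMod n)) : Subgroup (DihedralGroup n) where
  carrier := {x | match x with
    | DihedralGroup.r i => i ∈ A
    | DihedralGroup.sr _ => False}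
  one_mem' := by rw [Set.mem_setOf_eq, one_def]; exact A.zero_mem
  mul_mem' := by
    rintro (i | i) (j | j) hi hj <;>
      simp only [Set.mem_setOf_eq, r_mul_r, r_mul_sr, sr_mul_r, sr_mul_sr] at *
    · exact A.add_mem hi hj
  inv_mem' := by
    rintro (i | i) hi <;> simp only [Set.mem_setOf_eq, inv_r, inv_sr] at *
    exact A.neg_mem hi

@[simp] lemma r_mem_rotSG {A : AddSubgroup (ZMod n)} {i : ZMod n} :
    DihedralGroup.r i ∈ rotSG A ↔ i ∈ A := Iff.rfl

@[simp] lemma sr_not_mem_rotSG {A : AddSubgroup (ZMod n)} {j : ZMod n} :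
    DihedralGroup.sr j ∉ rotSG A := fun h => h

/-- The dihedral-type subgroup with rotation part `A` and reflection coset `c`. -/
def dihSG (A : AddSubgroup (ZMod n)) (c : ZMod n ⧸ A) : Subgroup (DihedralGroup n) where
  carrier := {x | match x with
    | DihedralGroup.r i => i ∈ A
    | DihedralGroup.sr j => (QuotientAddGroup.mk j : ZMod n ⧸ A) = c}
  one_mem' := by rw [Set.mem_setOf_eq, one_def]; exact A.zero_mem
  mul_mem' := by
    rintro (i | i) (j | j) hi hj <;>
      simp only [Set.mem_setOf_eq, r_mul_r, r_mul_sr, sr_mul_r, sr_mul_sr] at *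
    · exact A.add_mem hi hj
    · rw [QuotientAddGroup.mk_sub, (QuotientAddGroup.eq_zero_iff i).2 hi, hj, sub_zero]
    · rw [QuotientAddGroup.mk_add, (QuotientAddGroup.eq_zero_iff j).2 hj, hi, add_zero]
    · rw [← QuotientAddGroup.eq_zero_iff, QuotientAddGroup.mk_sub, hi, hj, sub_self]
  inv_mem' := by
    rintro (i | i) hi <;> simp only [Set.mem_setOf_eq, inv_r, inv_sr] at *
    · exact A.neg_mem hi
    · exact hi

@[simp] lemma r_mem_dihSG {A : AddSubgroup (ZMod n)} {c : ZMod n ⧸ A} {i : ZMod n} :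
    DihedralGroup.r i ∈ dihSG A c ↔ i ∈ A := Iff.rfl

@[simp] lemma sr_mem_dihSG {A : AddSubgroup (ZMod n)} {c : ZMod n ⧸ A} {j : ZMod n} :
    DihedralGroup.sr j ∈ dihSG A c ↔ (QuotientAddGroup.mk j : ZMod n ⧸ A) = c := Iff.rfl

/-- The index type enumerating subgroups of the dihedral group. -/
def Tt (n : ℕ) : Type :=
  {d : ℕ // d ∈ n.divisors} ⊕ Σ d : {d : ℕ // d ∈ n.divisors}, ZMod n ⧸ Φ n d.1

/-- The enumeration of subgroups of the dihedral group. -/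
def gfun (n : ℕ) : Tt n → Subgroup (DihedralGroup n)
  | .inl d => rotSG (Φ n d.1)
  | .inr ⟨d, c⟩ => dihSG (Φ n d.1) c

lemma gfun_bijective [NeZero n] : Function.Bijective (gfun n) := by
  constructor
  · rintro (⟨d, hd⟩ | ⟨⟨d, hd⟩, c⟩) (⟨e, he⟩ | ⟨⟨e, he⟩, c'⟩) h <;>
      simp only [gfun] at h
    · have hA : Φ n d = Φ n e := by
        ext i
        constructor <;> intro hi
        · have : DihedralGroup.r i ∈ rotSG (Φ n d) := hi
          rw [h] at this; exact this
        · have : DihedralGroup.r i ∈ rotSG (Φ n e) := hi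
          rw [← h] at this; exact this
      exact congrArg Sum.inl (Subtype.ext (phi_injOn hd he hA))
    · exfalso
      obtain ⟨j, rfl⟩ := QuotientAddGroup.mk_surjective c'
      have : DihedralGroup.sr j ∈ dihSG (Φ n e) (QuotientAddGroup.mk j) := rfl
      rw [← h] at this
      exact sr_not_mem_rotSG this
    · exfalso
      obtain ⟨j, rfl⟩ := QuotientAddGroup.mk_surjective c
      have : DihedralGroup.sr j ∈ dihSG (Φ n d) (QuotientAddGroup.mk j) := rfl
      rw [h] at this
      exact sr_not_mem_rotSG this
    · have hA : Φ n d = Φ n e := by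
        ext i
        constructor <;> intro hi
        · have : DihedralGroup.r i ∈ dihSG (Φ n d) c := hi
          rw [h] at this; exact this
        · have : DihedralGroup.r i ∈ dihSG (Φ n e) c' := hi
          rw [← h] at this; exact this
      obtain rfl : d = e := phi_injOn hd he hA
      obtain ⟨j, rfl⟩ := QuotientAddGroup.mk_surjective c
      have hc : (QuotientAddGroup.mk j : ZMod n ⧸ Φ n d) = c' := by
        have hm : DihedralGroup.sr j ∈ dihSG (Φ n d) (QuotientAddGroup.mk j) := rfl
        rw [h] at hm
        exact hm
      rw [hc]
  · intro K
    obtain ⟨d, hd, hΦ⟩ := phi_surj (rotA K)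
    by_cases hrefl : ∃ j, DihedralGroup.sr j ∈ K
    · obtain ⟨j₀, hj₀⟩ := hrefl
      refine ⟨.inr ⟨⟨d, hd⟩, QuotientAddGroup.mk j₀⟩, ?_⟩
      show dihSG (Φ n d) _ = K
      rw [hΦ]
      ext x
      rcases x with i | j
      · rfl
      · show (QuotientAddGroup.mk j : ZMod n ⧸ rotA K) = QuotientAddGroup.mk j₀ ↔ _
        rw [QuotientAddGroup.eq]
        constructor
        · intro hmem
          have h1 : DihedralGroup.r (-j + j₀) ∈ K := hmem
          have h2 := K.mul_mem h1 hj₀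
          rw [r_mul_sr, show j₀ - (-j + j₀) = j by ring] at h2
          exact h2
        · intro hj
          have h2 := K.mul_mem hj hj₀
          rw [sr_mul_sr] at h2
          show DihedralGroup.r (-j + j₀) ∈ K
          rwa [neg_add_eq_sub]
    · refine ⟨.inl ⟨d, hd⟩, ?_⟩
      show rotSG (Φ n d) = K
      rw [hΦ]
      ext x
      rcases x with i | j
      · rfl
      · push_neg at hrefl
        exact iff_of_false sr_not_mem_rotSG (hrefl j)

lemma card_quot [NeZero n] {d : ℕ} (hd : d ∈ n.divisors) :
    Nat.card (ZMod n ⧸ Φ n d) = d := by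
  rw [Nat.mem_divisors] at hd
  have hd0 : d ≠ 0 := by rintro rfl; exact hd.2 (Nat.eq_zero_of_zero_dvd hd.1)
  have hmul := AddSubgroup.index_mul_card (Φ n d)
  rw [card_phi hd.1, Nat.card_zmod] at hmul
  have hnd : 0 < n / d :=
    Nat.div_pos (Nat.le_of_dvd (Nat.pos_of_ne_zero hd.2) hd.1) (Nat.pos_of_ne_zero hd0)
  have hidx : n / (n / d) = (Φ n d).index := Nat.div_eq_of_eq_mul_left hnd hmul.symm
  rw [← AddSubgroup.index_eq_card, ← hidx, Nat.div_div_self hd.1 hd.2]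

lemma card_subgroups [NeZero n] :
    Nat.card (Subgroup (DihedralGroup n)) = n.divisors.card + ∑ d ∈ n.divisors, d := by
  rw [← Nat.card_eq_of_bijective _ (gfun_bijective (n := n))]
  rw [Tt, Nat.card_sum]
  congr 1
  · rw [Nat.card_eq_fintype_card, Fintype.card_coe]
  · haveI : ∀ d : {d : ℕ // d ∈ n.divisors}, Fintype (ZMod n ⧸ Φ n d.1) :=
      fun d => Fintype.ofFinite _
    rw [Nat.card_eq_fintype_card, Fintype.card_sigma, Finset.univ_eq_attach,
      ← Finset.sum_attach n.divisors (fun d => d)]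
    refine Finset.sum_congr rfl fun d _ => ?_
    rw [← Nat.card_eq_fintype_card, card_quot d.2]



instance : Nontrivial (DihedralGroup n) :=
  ⟨⟨DihedralGroup.r 0, DihedralGroup.sr 0, by intro h; cases h⟩⟩

lemma zpowers_r_normal (m : ZMod n) : (Subgroup.zpowers (DihedralGroup.r m)).Normal := by
  constructor
  intro x hx g
  obtain ⟨k, rfl⟩ := Subgroup.mem_zpowers_iff.mp hx
  rw [← conj_zpow]
  refine Subgroup.zpow_mem _ ?_ k
  rcases g with j | j
  · rw [r_mul_r, inv_r, r_mul_r, show j + m + -j = m by ring]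
    exact Subgroup.mem_zpowers _
  · rw [sr_mul_r, inv_sr, sr_mul_sr, show j - (j + m) = -m by ring, ← inv_r]
    exact Subgroup.inv_mem _ (Subgroup.mem_zpowers _)

lemma bot_ne_top' [NeZero n] : (⊥ : Subgroup (DihedralGroup n)) ≠ ⊤ := by
  intro h
  have hm : DihedralGroup.sr 0 ∈ (⊥ : Subgroup (DihedralGroup n)) := h ▸ Subgroup.mem_top _
  rw [Subgroup.mem_bot, one_def] at hm
  cases hm

lemma card_vertices [NeZero n] :
    Nat.card {H : Subgroup (DihedralGroup n) // H ≠ ⊥ ∧ H ≠ ⊤} =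
      (n.divisors.card + ∑ d ∈ n.divisors, d) - 2 := by
  classical
  haveI : Finite (Subgroup (DihedralGroup n)) :=
    Finite.of_injective (fun H => (H : Set (DihedralGroup n))) SetLike.coe_injective
  haveI : Fintype (Subgroup (DihedralGroup n)) := Fintype.ofFinite _
  have e : {H : Subgroup (DihedralGroup n) // H ≠ ⊥ ∧ H ≠ ⊤} ≃
      {H : Subgroup (DihedralGroup n) // ¬ (H = ⊥ ∨ H = ⊤)} :=
    Equiv.subtypeEquivRight (fun H => by tauto)
  have h2 : Fintype.card {H : Subgroup (DihedralGroup n) // H = ⊥ ∨ H = ⊤} = 2 := by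
    rw [Fintype.card_subtype]
    rw [show Finset.univ.filter (fun H : Subgroup (DihedralGroup n) => H = ⊥ ∨ H = ⊤)
        = {⊥, ⊤} by ext H; simp]
    rw [Finset.card_insert_of_notMem (by simpa using bot_ne_top'), Finset.card_singleton]
  rw [Nat.card_congr e, Nat.card_eq_fintype_card, Fintype.card_subtype_compl, h2,
    ← Nat.card_eq_fintype_card, card_subgroups]

end Stmt11Aux


/-- for `n ≥ 3` and each divisor `r ≠ 1` of `n`, the cyclic
subgroup `⟨a^(n/r)⟩` of `D_n`, as a vertex of `Γ(D_n)`, has degree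
`τ(n) + σ(n) - 3`; i.e. it is adjacent to every other vertex of `Γ(D_n)`. -/
theorem stmt_11 (n : ℕ) (hn : 3 ≤ n) (r : ℕ) (hr : r ∣ n) (hr1 : r ≠ 1)
    (H : {H : Subgroup (DihedralGroup n) // H ≠ ⊥ ∧ H ≠ ⊤})
    (hH : H.1 = Subgroup.zpowers (DihedralGroup.r ((n / r : ℕ) : ZMod n))) :
    Nat.card ((permGraph (DihedralGroup n)).neighborSet H) =
      n.divisors.card + (∑ d ∈ n.divisors, d) - 3 ∧
    ∀ K, K ≠ H → (permGraph (DihedralGroup n)).Adj H K := by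
  haveI : NeZero n := ⟨by omega⟩
  classical
  haveI : Finite (Subgroup (DihedralGroup n)) :=
    Finite.of_injective (fun H => (H : Set (DihedralGroup n))) SetLike.coe_injective
  have hnorm : H.1.Normal := by rw [hH]; exact Stmt11Aux.zpowers_r_normal _
  haveI := hnorm
  have adj : ∀ K, K ≠ H → (permGraph (DihedralGroup n)).Adj H K := by
    intro K hK
    show H ≠ K ∧ _
    refine ⟨Ne.symm hK, ?_⟩
    calc (H.1 : Set (DihedralGroup n)) * K.1
        = ↑(H.1 ⊔ K.1) := (Subgroup.normal_mul H.1 K.1).symm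
      _ = ↑(K.1 ⊔ H.1) := by rw [sup_comm]
      _ = (K.1 : Set (DihedralGroup n)) * H.1 := Subgroup.mul_normal K.1 H.1
  refine ⟨?_, adj⟩
  have hnb : (permGraph (DihedralGroup n)).neighborSet H = {H}ᶜ := by
    ext K
    simp only [SimpleGraph.mem_neighborSet, Set.mem_compl_iff, Set.mem_singleton_iff]
    constructor
    · intro hA hKH
      exact hA.ne hKH.symm
    · intro hne
      exact adj K hne
  rw [hnb, Nat.card_coe_set_eq]
  have hcompl := Set.ncard_add_ncard_compl
    ({H} : Set {H : Subgroup (DihedralGroup n) // H ≠ ⊥ ∧ H ≠ ⊤})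
  rw [Set.ncard_singleton, Stmt11Aux.card_vertices] at hcompl
  omega
end

section
/- Let n = 2^α with α ≥ 2. Then twice the number of edges of the permutability graph of subgroups Γ(D_n) of the dihedral group D_n equals 2^{α+1}(6α − 7) + α² − 5α + 14. -/
open scoped Pointwise

/-!
Every subgroup of `D_n` is either a rotation subgroup `{r a | a ∈ A}` or a dihedral subgroup
`{r a, sr (i + a) | a ∈ A}` for an additive subgroup `A` of `ZMod n`. Rotation subgroups are
normal, and two dihedral subgroups `(A, i)`, `(B, j)` permute iff `2 (j - i) ∈ A + B`.
For `n = 2^α` the subgroups of `ZMod n` form the chain `2^k ℤ / 2^α ℤ`, so the proper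
nontrivial subgroups of `D_n` are the rotation subgroups with `k < α` and the dihedral subgroups
with `1 ≤ k ≤ α` and `i` taken mod `2^k`; two dihedral ones permute iff their offsets agree
modulo `2^(min k l - 1)`. Counting, for each subgroup, the subgroups permuting with it (itself
included) expresses `2|E| + |V|` as an explicit double sum of powers of two.
-/

namespace ZMod

open AddSubgroup

variable {n d d' : ℕ}

theorem intCast_mem_zmultiples_natCast (hd : d ∣ n) (x : ℤ) :
    (x : ZMod n) ∈ zmultiples (d : ZMod n) ↔ (d : ℤ) ∣ x := by
  refine ⟨fun h => ?_,
    fun ⟨c, hc⟩ => mem_zmultiples_iff.mpr ⟨c, by simp [hc, mul_comm]⟩⟩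
  obtain ⟨m, hm⟩ := mem_zmultiples_iff.mp h
  have hn : (n : ℤ) ∣ x - m * d := by
    rw [← intCast_zmod_eq_zero_iff_dvd]
    push_cast
    rw [← hm, zsmul_eq_mul, sub_self]
  exact (dvd_sub_left (dvd_mul_left _ _)).mp ((Int.natCast_dvd_natCast.mpr hd).trans hn)

theorem zmultiples_natCast_le (h : d ∣ d') :
    zmultiples (d' : ZMod n) ≤ zmultiples (d : ZMod n) := by
  obtain ⟨c, rfl⟩ := h
  exact zmultiples_le.mpr (mem_zmultiples_iff.mpr ⟨c, by simp [mul_comm]⟩)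

theorem natCast_dvd_of_zmultiples_le (hd : d ∣ n)
    (h : zmultiples (d' : ZMod n) ≤ zmultiples (d : ZMod n)) : d ∣ d' := by
  have := (intCast_mem_zmultiples_natCast hd d').mp
    (by rw [Int.cast_natCast]; exact h (mem_zmultiples _))
  exact Int.natCast_dvd_natCast.mp this

theorem exists_dvd_eq_zmultiples (A : AddSubgroup (ZMod n)) :
    ∃ d, d ∣ n ∧ A = zmultiples (d : ZMod n) := by
  obtain ⟨a, ha⟩ := Int.subgroup_cyclic (A.comap (Int.castAddHom (ZMod n)))
  rw [← zmultiples_eq_closure, ← Int.zmultiples_natAbs] at ha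
  have hmap := map_comap_eq_self_of_surjective (f := Int.castAddHom (ZMod n))
    ZMod.intCast_surjective A
  refine ⟨a.natAbs, ?_, ?_⟩
  · have : (n : ℤ) ∈ A.comap (Int.castAddHom (ZMod n)) := by simp
    rw [ha, Int.mem_zmultiples_iff] at this
    exact Int.natCast_dvd_natCast.mp this
  · rw [← hmap, ha, AddMonoidHom.map_zmultiples]
    simp

end ZMod

open Finset

theorem SimpleGraph.two_mul_card_edgeFinset_add_card_eq_sum {V : Type*} [Fintype V]
    [DecidableEq V] (G : SimpleGraph V) [DecidableRel G.Adj] (R : V → V → Prop) [DecidableRel R]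
    (hR : ∀ v, R v v) (hG : ∀ v w, G.Adj v w ↔ v ≠ w ∧ R v w) :
    2 * #G.edgeFinset + Fintype.card V = ∑ v, #{w | R v w} := by
  rw [← G.sum_degrees_eq_twice_card_edges, ← card_univ, card_eq_sum_ones, ← sum_add_distrib]
  refine sum_congr rfl fun v _ => ?_
  have hnbr : G.neighborFinset v = ({w | R v w} : Finset V).erase v := by
    ext w
    simp [hG, ne_comm]
  rw [← card_neighborFinset_eq_degree, hnbr, card_erase_add_one (by simpa using hR v)]

theorem Fin.card_filter_modEq_of_dvd {n r : ℕ} (hr : 0 < r) (hrn : r ∣ n) (i : ℕ) :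
    #{j : Fin n | i ≡ j [MOD r]} = n / r := by
  have h := Nat.count_modEq_card n hr i
  rw [Nat.mod_eq_zero_of_dvd hrn, if_neg (Nat.not_lt_zero _), add_zero,
    Nat.count_eq_card_filter_range] at h
  rw [← h]
  refine card_nbij (fun j => j.1) (fun j hj => ?_) (fun _ _ _ _ => Fin.ext) (fun k hk => ?_)
  · simp only [coe_filter, Set.mem_ofPred_eq, mem_univ, true_and] at hj
    simp only [coe_filter, mem_range, Set.mem_ofPred_eq]
    exact ⟨j.2, hj.symm⟩
  · simp only [coe_filter, mem_range, Set.mem_ofPred_eq] at hk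
    exact ⟨⟨k, hk.1⟩, by simpa using hk.2.symm, rfl⟩

theorem two_pow_succ_mul_two_pow_sub_min (k l : ℕ) :
    2 ^ (k + 1) * 2 ^ (l + 1 - min k l) = 4 * 2 ^ max k l := by
  rw [show 4 = 2 ^ 2 by rfl, ← pow_add, ← pow_add]
  congr 1
  omega

theorem sum_range_two_pow_succ (α : ℕ) :
    ∑ k ∈ range α, (2 : ℤ) ^ (k + 1) = 2 ^ (α + 1) - 2 := by
  induction α with
  | zero => simp
  | succ a ih => rw [sum_range_succ, ih]; ring

theorem sum_range_sum_range_two_pow_max (α : ℕ) :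
    ∑ k ∈ range α, ∑ l ∈ range α, (2 : ℤ) ^ max k l = (2 * α - 3) * 2 ^ α + 3 := by
  induction α with
  | zero => simp
  | succ a ih =>
    have hrow : ∑ k ∈ range a, (2 : ℤ) ^ max k a = a * 2 ^ a := by
      rw [sum_congr rfl fun k hk => by rw [max_eq_right (mem_range.mp hk).le], sum_const,
        card_range, nsmul_eq_mul]
    have hcol : ∑ l ∈ range a, (2 : ℤ) ^ max a l = a * 2 ^ a := by
      simpa only [max_comm] using hrow
    rw [sum_range_succ, sum_range_succ, max_self, hcol]
    simp only [sum_range_succ, sum_add_distrib, ih, hrow]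
    push_cast
    ring

namespace DihedralGroup

variable {n : ℕ}

def rotations (A : AddSubgroup (ZMod n)) : Subgroup (DihedralGroup n) where
  carrier
    | r a => a ∈ A
    | sr _ => False
  one_mem' := A.zero_mem
  mul_mem' := by
    rintro (a | a) (b | b) ha hb
    · exact A.add_mem ha hb
    all_goals contradiction
  inv_mem' := by
    rintro (a | a) ha
    · exact A.neg_mem ha
    · exact ha

def dihedral (A : AddSubgroup (ZMod n)) (i : ZMod n) : Subgroup (DihedralGroup n) where
  carrier
    | r a => a ∈ A
    | sr b => b - i ∈ A
  one_mem' := A.zero_mem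
  mul_mem' := by
    rintro (a | a) (b | b) ha hb
    · exact A.add_mem ha hb
    · rw [r_mul_sr]
      exact (show b - a - i ∈ A by simpa only [sub_right_comm] using A.sub_mem hb ha)
    · rw [sr_mul_r]
      exact (show a + b - i ∈ A by simpa only [add_sub_right_comm] using A.add_mem ha hb)
    · rw [sr_mul_sr]
      exact (show b - a ∈ A by simpa only [sub_sub_sub_cancel_right] using A.sub_mem hb ha)
  inv_mem' := by
    rintro (a | a) ha
    · exact A.neg_mem ha
    · exact ha

variable {A B : AddSubgroup (ZMod n)} {i j a : ZMod n}

@[simp] theorem r_mem_rotations : r a ∈ rotations A ↔ a ∈ A := Iff.rfl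
@[simp] theorem sr_notMem_rotations : sr a ∉ rotations A := id
@[simp] theorem r_mem_dihedral : r a ∈ dihedral A i ↔ a ∈ A := Iff.rfl
@[simp] theorem sr_mem_dihedral : sr a ∈ dihedral A i ↔ a - i ∈ A := Iff.rfl

def rotationPart (H : Subgroup (DihedralGroup n)) : AddSubgroup (ZMod n) where
  carrier := {a | r a ∈ H}
  zero_mem' := H.one_mem
  add_mem' ha hb := by simpa only [Set.mem_ofPred_eq, r_mul_r] using H.mul_mem ha hb
  neg_mem' ha := by simpa only [Set.mem_ofPred_eq, inv_r] using H.inv_mem ha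

@[simp] theorem mem_rotationPart {H : Subgroup (DihedralGroup n)} :
    a ∈ rotationPart H ↔ r a ∈ H :=
  Iff.rfl

@[simp] theorem rotationPart_rotations : rotationPart (rotations A) = A := rfl
@[simp] theorem rotationPart_dihedral : rotationPart (dihedral A i) = A := rfl

theorem eq_rotations_or_eq_dihedral (H : Subgroup (DihedralGroup n)) :
    H = rotations (rotationPart H) ∨ ∃ i, H = dihedral (rotationPart H) i := by
  by_cases hs : ∃ i, sr i ∈ H
  · obtain ⟨i, hi⟩ := hs
    refine Or.inr ⟨i, ?_⟩
    ext (a | b)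
    · rfl
    · rw [sr_mem_dihedral, mem_rotationPart, ← sr_mul_sr]
      exact ⟨H.mul_mem hi, fun h => by simpa using H.mul_mem hi h⟩
  · push Not at hs
    refine Or.inl ?_
    ext (a | b)
    · rfl
    · exact iff_of_false (hs b) sr_notMem_rotations

instance rotations_normal : (rotations A).Normal where
  conj_mem := by
    rintro (a | a) ha (b | b)
    · simpa [r_mul_r] using ha
    · simpa [r_mul_sr, sr_mul_r] using A.neg_mem ha
    all_goals contradiction

theorem rotations_ne_top : rotations A ≠ ⊤ :=
  fun h => sr_notMem_rotations (h ▸ Subgroup.mem_top (sr 0 : DihedralGroup n))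

theorem rotations_injective : Function.Injective (rotations (n := n)) := fun A B h => by
  rw [← rotationPart_rotations (A := A), h, rotationPart_rotations]

theorem sr_ne_one : sr a ≠ 1 := by
  rw [one_def]
  nofun

theorem rotations_bot : rotations (⊥ : AddSubgroup (ZMod n)) = ⊥ := by
  ext (a | a)
  · rw [r_mem_rotations, Subgroup.mem_bot, one_def, r.injEq, AddSubgroup.mem_bot]
  · exact iff_of_false sr_notMem_rotations sr_ne_one

theorem rotations_eq_bot : rotations A = ⊥ ↔ A = ⊥ :=
  rotations_injective.eq_iff' rotations_bot

theorem dihedral_ne_bot : dihedral A i ≠ ⊥ := fun h =>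
  sr_ne_one (Subgroup.mem_bot.mp (h ▸ (show sr i ∈ dihedral A i by simp)))

theorem dihedral_eq_top : dihedral A i = ⊤ ↔ A = ⊤ := by
  refine ⟨fun h => ?_, fun h => ?_⟩
  · rw [← rotationPart_dihedral (A := A) (i := i), h]
    ext
    simp
  · subst h
    ext (a | a) <;> simp

theorem rotations_ne_dihedral : rotations A ≠ dihedral B i := fun h =>
  sr_notMem_rotations (h ▸ (show sr i ∈ dihedral B i by simp))

theorem dihedral_eq_dihedral : dihedral A i = dihedral B j ↔ A = B ∧ j - i ∈ A := by
  refine ⟨fun h => ⟨?_, ?_⟩, fun ⟨hAB, hji⟩ => ?_⟩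
  · rw [← rotationPart_dihedral (A := A) (i := i), h, rotationPart_dihedral]
  · exact sr_mem_dihedral.mp (h ▸ (show sr j ∈ dihedral B j by simp))
  · subst hAB
    ext (a | b)
    · rfl
    · rw [sr_mem_dihedral, sr_mem_dihedral, ← sub_add_sub_cancel b j i,
        A.add_mem_cancel_right hji]

theorem dihedral_mul_subset (h : 2 * (j - i) ∈ A ⊔ B) :
    (dihedral A i : Set (DihedralGroup n)) * dihedral B j ⊆ dihedral B j * dihedral A i := by
  obtain ⟨c, hc, d, hd, hcd⟩ := AddSubgroup.mem_sup.mp h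
  rintro _ ⟨(a | a), ha, (b | b), hb, rfl⟩
  · exact ⟨r b, hb, r a, ha, by simp [add_comm]⟩
  · exact ⟨sr b, hb, r (-a), A.neg_mem ha, by simp [sub_eq_add_neg]⟩
  · exact ⟨r (-b), B.neg_mem hb, sr a, ha, by simp⟩
  · -- solve `x - j ∈ B`, `y - i ∈ A`, `y - x = b - a` using `c + d = 2 * (j - i)`
    refine ⟨sr (j - (b - j) - d), ?_, sr (j - (b - j) - d + b - a), ?_, by simp; ring⟩
    · show j - (b - j) - d - j ∈ B
      convert B.sub_mem (B.neg_mem hb) hd using 1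
      ring
    · show j - (b - j) - d + b - a - i ∈ A
      convert A.sub_mem hc ha using 1
      linear_combination -hcd

theorem dihedral_mul_comm_iff :
    (dihedral A i : Set (DihedralGroup n)) * dihedral B j = dihedral B j * dihedral A i ↔
      2 * (j - i) ∈ A ⊔ B := by
  refine ⟨fun h => ?_, fun h => (dihedral_mul_subset h).antisymm (dihedral_mul_subset ?_)⟩
  · have hmem : sr i * sr j ∈ (dihedral B j : Set (DihedralGroup n)) * dihedral A i :=
      h ▸ Set.mul_mem_mul (by simp) (by simp)
    obtain ⟨(b | b), hb, (a | a), ha, hab⟩ := hmem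
    · have hji : j - i = b + a := by simpa using hab.symm
      rw [two_mul, hji, sup_comm]
      have hba := AddSubgroup.add_mem_sup hb ha
      exact add_mem hba hba
    · simp at hab
    · simp at hab
    · have hji : j - i = a - b := by simpa using hab.symm
      refine AddSubgroup.mem_sup.mpr ⟨a - i, ha, -(b - j), B.neg_mem hb, ?_⟩
      linear_combination -hji
  · rw [sup_comm]
    convert neg_mem h using 1
    ring

open AddSubgroup

variable {α k l : ℕ}

abbrev twoPowMultiples (α k : ℕ) : AddSubgroup (ZMod (2 ^ α)) :=
  zmultiples ((2 ^ k : ℕ) : ZMod (2 ^ α))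

theorem intCast_mem_twoPowMultiples (hk : k ≤ α) (x : ℤ) :
    (x : ZMod (2 ^ α)) ∈ twoPowMultiples α k ↔ 2 ^ k ∣ x := by
  rw [ZMod.intCast_mem_zmultiples_natCast (pow_dvd_pow 2 hk), Nat.cast_pow, Nat.cast_ofNat]

theorem twoPowMultiples_sup :
    twoPowMultiples α k ⊔ twoPowMultiples α l = twoPowMultiples α (min k l) := by
  rcases le_total k l with h | h
  · rw [min_eq_left h, sup_eq_left.mpr (ZMod.zmultiples_natCast_le (pow_dvd_pow 2 h))]
  · rw [min_eq_right h, sup_eq_right.mpr (ZMod.zmultiples_natCast_le (pow_dvd_pow 2 h))]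

theorem twoPowMultiples_inj (hk : k ≤ α) (hl : l ≤ α) :
    twoPowMultiples α k = twoPowMultiples α l ↔ k = l := by
  refine ⟨fun h => Nat.pow_right_injective le_rfl (Nat.dvd_antisymm ?_ ?_), fun h => h ▸ rfl⟩
  · exact ZMod.natCast_dvd_of_zmultiples_le (pow_dvd_pow 2 hk) h.ge
  · exact ZMod.natCast_dvd_of_zmultiples_le (pow_dvd_pow 2 hl) h.le

theorem twoPowMultiples_self : twoPowMultiples α α = ⊥ := by
  simp

theorem twoPowMultiples_zero : twoPowMultiples α 0 = ⊤ :=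
  eq_top_iff.mpr fun x _ => by
    obtain ⟨y, rfl⟩ := ZMod.intCast_surjective x
    exact (intCast_mem_twoPowMultiples α.zero_le y).mpr (by simp)

theorem exists_eq_twoPowMultiples (A : AddSubgroup (ZMod (2 ^ α))) :
    ∃ k ≤ α, A = twoPowMultiples α k := by
  obtain ⟨d, hd, rfl⟩ := ZMod.exists_dvd_eq_zmultiples A
  obtain ⟨k, hk, rfl⟩ := (Nat.dvd_prime_pow Nat.prime_two).mp hd
  exact ⟨k, hk, rfl⟩

abbrev SubgroupIndex (α : ℕ) := Fin α ⊕ Σ k : Fin α, Fin (2 ^ (k.1 + 1))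

namespace SubgroupIndex

def toSubgroup : SubgroupIndex α → Subgroup (DihedralGroup (2 ^ α))
  | .inl k => rotations (twoPowMultiples α k)
  | .inr ⟨k, i⟩ => dihedral (twoPowMultiples α (k + 1)) (i : ℕ)

def Permutes : SubgroupIndex α → SubgroupIndex α → Prop
  | .inr ⟨k, i⟩, .inr ⟨l, j⟩ => i.1 ≡ j.1 [MOD 2 ^ min k.1 l.1]
  | _, _ => True

theorem permutes_refl (x : SubgroupIndex α) : Permutes x x := by
  rcases x with k | ⟨k, i⟩
  · trivial
  · exact Nat.ModEq.refl _

theorem toSubgroup_ne_bot (x : SubgroupIndex α) : toSubgroup x ≠ ⊥ := by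
  rcases x with k | ⟨k, i⟩
  · rw [toSubgroup, Ne, rotations_eq_bot, ← twoPowMultiples_self,
      twoPowMultiples_inj k.2.le le_rfl]
    exact k.2.ne
  · exact dihedral_ne_bot

theorem toSubgroup_ne_top (x : SubgroupIndex α) : toSubgroup x ≠ ⊤ := by
  rcases x with k | ⟨k, i⟩
  · exact rotations_ne_top
  · rw [toSubgroup, Ne, dihedral_eq_top, ← twoPowMultiples_zero,
      twoPowMultiples_inj k.2 α.zero_le]
    exact k.1.succ_ne_zero

theorem toSubgroup_injective : Function.Injective (toSubgroup (α := α)) := by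
  rintro (k | ⟨k, i⟩) (l | ⟨l, j⟩) h <;> simp only [toSubgroup] at h
  · rw [rotations_injective.eq_iff, twoPowMultiples_inj k.2.le l.2.le] at h
    exact congrArg _ (Fin.ext h)
  · exact absurd h rotations_ne_dihedral
  · exact absurd h.symm rotations_ne_dihedral
  · obtain ⟨hkl, hij⟩ := dihedral_eq_dihedral.mp h
    obtain rfl : k = l := Fin.ext (by simpa using (twoPowMultiples_inj k.2 l.2).mp hkl)
    have hdvd : (2 ^ (k.1 + 1) : ℤ) ∣ j.1 - i.1 := by
      rw [← intCast_mem_twoPowMultiples k.2]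
      push_cast
      exact hij
    rw [Fin.ext ((Nat.modEq_iff_dvd.mpr (by exact_mod_cast hdvd)).eq_of_lt_of_lt i.2 j.2)]

theorem exists_toSubgroup_eq {H : Subgroup (DihedralGroup (2 ^ α))} (hbot : H ≠ ⊥)
    (htop : H ≠ ⊤) : ∃ x, toSubgroup x = H := by
  obtain ⟨k, hk, hA⟩ := exists_eq_twoPowMultiples (rotationPart H)
  rcases eq_rotations_or_eq_dihedral H with hH | ⟨i, hH⟩ <;> rw [hA] at hH <;> subst hH
  · have hkα : k < α := by
      refine hk.lt_of_ne fun hkα => hbot ?_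
      rw [hkα, twoPowMultiples_self, rotations_bot]
    exact ⟨.inl ⟨k, hkα⟩, rfl⟩
  · obtain ⟨k, rfl⟩ : ∃ k', k = k' + 1 := by
      refine Nat.exists_eq_succ_of_ne_zero fun hk0 => htop ?_
      rw [hk0, twoPowMultiples_zero, dihedral_eq_top]
    refine ⟨.inr ⟨⟨k, hk⟩, ⟨i.val % 2 ^ (k + 1), Nat.mod_lt _ (by positivity)⟩⟩,
      dihedral_eq_dihedral.mpr ⟨rfl, ?_⟩⟩
    have hcast : i - ((i.val % 2 ^ (k + 1) : ℕ) : ZMod (2 ^ α)) =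
        ((i.val - (i.val % 2 ^ (k + 1) : ℕ) : ℤ) : ZMod (2 ^ α)) := by
      rw [Int.cast_sub, Int.cast_natCast, Int.cast_natCast, ZMod.natCast_zmod_val]
    change i - _ ∈ twoPowMultiples α (k + 1)
    rw [hcast, intCast_mem_twoPowMultiples hk]
    exact_mod_cast Nat.modEq_iff_dvd.mp (Nat.mod_modEq i.val (2 ^ (k + 1)))

instance (k : Fin α) : (toSubgroup (.inl k : SubgroupIndex α)).Normal :=
  rotations_normal

theorem toSubgroup_mul_comm_iff (x y : SubgroupIndex α) :
    (toSubgroup x : Set (DihedralGroup (2 ^ α))) * toSubgroup y =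
      toSubgroup y * toSubgroup x ↔ Permutes x y := by
  rcases x with k | ⟨k, i⟩
  · refine iff_of_true ?_ trivial
    rw [← Subgroup.normal_mul, ← Subgroup.mul_normal, sup_comm]
  rcases y with l | ⟨l, j⟩
  · refine iff_of_true ?_ trivial
    rw [← Subgroup.mul_normal, ← Subgroup.normal_mul, sup_comm]
  have hcast : (2 : ZMod (2 ^ α)) * ((j : ℕ) - (i : ℕ)) =
      ((2 * (j.1 - i.1 : ℤ) : ℤ) : ZMod (2 ^ α)) := by
    push_cast
    rfl
  rw [toSubgroup, toSubgroup, dihedral_mul_comm_iff, twoPowMultiples_sup, min_add_add_right, hcast,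
    intCast_mem_twoPowMultiples (by omega), pow_succ', mul_dvd_mul_iff_left two_ne_zero, Permutes,
    Nat.modEq_iff_dvd]
  norm_cast

noncomputable def equivProperSubgroup :
    SubgroupIndex α ≃ {H : Subgroup (DihedralGroup (2 ^ α)) // H ≠ ⊥ ∧ H ≠ ⊤} :=
  Equiv.ofBijective (fun x => ⟨toSubgroup x, toSubgroup_ne_bot x, toSubgroup_ne_top x⟩)
    ⟨fun _ _ h => toSubgroup_injective (congrArg Subtype.val h),
      fun H => (exists_toSubgroup_eq H.2.1 H.2.2).imp fun _ h => Subtype.ext h⟩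

theorem comap_permGraph_adj {x y : SubgroupIndex α} :
    ((permGraph (DihedralGroup (2 ^ α))).comap equivProperSubgroup).Adj x y ↔
      x ≠ y ∧ Permutes x y := by
  rw [SimpleGraph.comap_adj]
  exact and_congr equivProperSubgroup.injective.ne_iff (toSubgroup_mul_comm_iff x y)

instance : DecidableRel (Permutes (α := α))
  | .inl _, _ => instDecidableTrue
  | .inr _, .inl _ => instDecidableTrue
  | .inr ⟨_, _⟩, .inr ⟨_, _⟩ => inferInstanceAs (Decidable (_ ≡ _ [MOD _]))

theorem card_eq : Fintype.card (SubgroupIndex α) = α + ∑ k ∈ range α, 2 ^ (k + 1) := by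
  simp [Fin.sum_univ_eq_sum_range (fun k => 2 ^ (k + 1))]

theorem card_filter_permutes_inl (k : Fin α) :
    #{y | Permutes (.inl k) y} = Fintype.card (SubgroupIndex α) := by
  rw [card_filter]
  simp [Permutes]

theorem card_filter_permutes_inr (k : Fin α) (i : Fin (2 ^ (k.1 + 1))) :
    #{y | Permutes (.inr ⟨k, i⟩) y} = α + ∑ l ∈ range α, 2 ^ (l + 1 - min k.1 l) := by
  rw [card_filter, Fintype.sum_sum_type, Fintype.sum_sigma]
  simp only [Permutes, ↓reduceIte, sum_const, card_univ, Fintype.card_fin, smul_eq_mul, mul_one,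
    Nat.add_left_cancel_iff]
  rw [← Fin.sum_univ_eq_sum_range (fun l => 2 ^ (l + 1 - min k.1 l)) α]
  refine sum_congr rfl fun l _ => ?_
  rw [← Nat.pow_div (by omega) two_pos,
    ← Fin.card_filter_modEq_of_dvd (by positivity) (pow_dvd_pow 2 (by omega)) i.1, card_filter]
  rfl

theorem sum_card_filter_permutes :
    ∑ x : SubgroupIndex α, #{y | Permutes x y} =
      α * Fintype.card (SubgroupIndex α) + α * ∑ k ∈ range α, 2 ^ (k + 1) +
        4 * ∑ k ∈ range α, ∑ l ∈ range α, 2 ^ max k l := by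
  rw [Fintype.sum_sum_type, Fintype.sum_sigma]
  simp only [card_filter_permutes_inl, card_filter_permutes_inr, sum_const, card_univ,
    Fintype.card_fin, smul_eq_mul]
  rw [Fin.sum_univ_eq_sum_range
    (fun k => 2 ^ (k + 1) * (α + ∑ l ∈ range α, 2 ^ (l + 1 - min k l))), add_assoc]
  simp only [mul_add, sum_add_distrib, mul_sum, two_pow_succ_mul_two_pow_sub_min]
  simp only [← sum_mul, ← mul_sum]
  ring

end SubgroupIndex

end DihedralGroup

open DihedralGroup SubgroupIndex

theorem stmt_12_general (α : ℕ) :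
    (2 * Nat.card (permGraph (DihedralGroup (2 ^ α))).edgeSet : ℤ) =
      2 ^ (α + 1) * (6 * (α : ℤ) - 7) + (α : ℤ) ^ 2 - 5 * (α : ℤ) + 14 := by
  classical
  set G := (permGraph (DihedralGroup (2 ^ α))).comap (equivProperSubgroup (α := α))
  have hcard : Nat.card (permGraph (DihedralGroup (2 ^ α))).edgeSet = #G.edgeFinset := by
    rw [← Nat.card_congr (SimpleGraph.Iso.comap equivProperSubgroup (permGraph _)).mapEdgeSet,
      Nat.card_eq_fintype_card, SimpleGraph.edgeFinset_card]
  have hcount := G.two_mul_card_edgeFinset_add_card_eq_sum Permutes permutes_refl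
    fun _ _ => comap_permGraph_adj
  rw [sum_card_filter_permutes, card_eq] at hcount
  have hcount' := congrArg (Nat.cast : ℕ → ℤ) hcount
  push_cast at hcount'
  rw [sum_range_two_pow_succ, sum_range_sum_range_two_pow_max] at hcount'
  rw [hcard]
  linear_combination hcount'

/-- for `n = 2^α`, `α ≥ 2`, twice the number of edges of
`Γ(D_n)` equals `2^(α+1)(6α - 7) + α² - 5α + 14`. -/
theorem stmt_12 (α : ℕ) (hα : 2 ≤ α) :
    (2 * Nat.card (permGraph (DihedralGroup (2 ^ α))).edgeSet : ℤ) =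
      2 ^ (α + 1) * (6 * (α : ℤ) - 7) + (α : ℤ) ^ 2 - 5 * (α : ℤ) + 14 :=
  stmt_12_general α
end

section
/- Let n ≥ 3 be an integer. The independence number of the permutability graph of subgroups Γ(D_n) of the dihedral group D_n equals n if n is odd, and equals n/2 if n is even. -/
open scoped Pointwise

/-- A set of vertices is independent if no two of its members are adjacent. -/
def IsIndepSet {V : Type*} (G : SimpleGraph V) (s : Set V) : Prop :=
  s.Pairwise fun u v => ¬ G.Adj u v

/-- The independence number of a graph: the largest cardinality of an
independent set of vertices. -/
noncomputable def indepNum {V : Type*} (G : SimpleGraph V) : ℕ :=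
  sSup {k | ∃ s : Set V, IsIndepSet G s ∧ s.ncard = k}

/-!
A subgroup of `D_n` without reflections consists of rotations and is normal, so it permutes
with every subgroup; hence in an independent set with at least two members every member
contains a reflection `sr i`. Two subgroups containing reflections `sr i` and `sr j` with
`2i = 2j` permute, while the subgroups `{1, sr i}` and `{1, sr j}` do not permute as soon as
`2i ≠ 2j`. So choosing a reflection in each member injects an independent set into the image of
doubling on `ZMod n`, and the groups `{1, sr i}`, one for each value of `2i`, form an
independent set of that size. The image of doubling has `n / gcd(n, 2)` elements.
-/

open scoped Pointwise

theorem Subgroup.coe_mul_comm_of_subset {G : Type*} [Group G] {H K : Subgroup G}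
    (h : (H : Set G) * K ⊆ K * H) : (H : Set G) * K = K * H := by
  refine h.antisymm ?_
  simpa [mul_inv_rev] using Set.inv_subset_inv.mpr h

theorem Subgroup.coe_mul_comm_of_normal {G : Type*} [Group G] (N H : Subgroup G) [N.Normal] :
    (N : Set G) * H = H * N := by
  rw [← normal_mul, ← mul_normal, sup_comm]

theorem indepNum_eq_of_isIndepSet {V : Type*} {G : SimpleGraph V} {k : ℕ}
    (hex : ∃ s, IsIndepSet G s ∧ s.ncard = k) (hle : ∀ s, IsIndepSet G s → s.ncard ≤ k) :
    indepNum G = k := by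
  have hbdd : ∀ m ∈ {k | ∃ s : Set V, IsIndepSet G s ∧ s.ncard = k}, m ≤ k := by
    rintro _ ⟨s, hs, rfl⟩
    exact hle s hs
  exact le_antisymm (csSup_le ⟨k, hex⟩ hbdd) (le_csSup ⟨k, hbdd⟩ hex)

theorem IsIndepSet.not_normal_of_permGraph {G : Type*} [Group G]
    {s : Set {H : Subgroup G // H ≠ ⊥ ∧ H ≠ ⊤}} (hs : IsIndepSet (permGraph G) s)
    {H K : {H : Subgroup G // H ≠ ⊥ ∧ H ≠ ⊤}} (hH : H ∈ s) (hK : K ∈ s)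
    (hHK : H ≠ K) : ¬ H.1.Normal :=
  fun _ => hs hH hK hHK ⟨hHK, Subgroup.coe_mul_comm_of_normal H.1 K.1⟩

theorem Nat.div_gcd_two (n : ℕ) : n / n.gcd 2 = if Odd n then n else n / 2 := by
  split_ifs with hn
  · rw [Nat.coprime_two_right.mpr hn, Nat.div_one]
  · rw [Nat.gcd_eq_right (Nat.not_odd_iff_even.mp hn).two_dvd]

namespace DihedralGroup

variable {n : ℕ}

theorem mem_zpowers_sr {i : ZMod n} {g : DihedralGroup n} :
    g ∈ Subgroup.zpowers (sr i) ↔ g = 1 ∨ g = sr i := by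
  classical
  have hfin : IsOfFinOrder (sr i) := orderOf_pos_iff.mp (by simp [orderOf_sr])
  rw [hfin.mem_zpowers_iff_mem_range_orderOf, orderOf_sr]
  simp [Nat.le_one_iff_eq_zero_or_eq_one, or_and_right, exists_or, eq_comm (b := g)]

theorem zpowers_sr_ne_bot (i : ZMod n) : Subgroup.zpowers (sr i) ≠ ⊥ :=
  Subgroup.zpowers_ne_bot.mpr <| by
    simp only [one_def, ne_eq, reduceCtorEq, not_false_eq_true]

theorem zpowers_sr_ne_top (hn : n ≠ 1) (i : ZMod n) : Subgroup.zpowers (sr i) ≠ ⊤ := by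
  intro h
  have := congrArg (fun H : Subgroup (DihedralGroup n) => Nat.card H) h
  simp only [Nat.card_zpowers, orderOf_sr, Subgroup.card_top, nat_card] at this
  omega

theorem exists_sr_mem_of_not_normal {H : Subgroup (DihedralGroup n)} (hH : ¬ H.Normal) :
    ∃ i, sr i ∈ H := by
  by_contra! h
  refine hH ⟨fun g hg c => ?_⟩
  rcases g with b | b
  · rcases c with a | a
    · simpa [r_mul_r, inv_r] using hg
    · simpa [r_mul_sr, sr_mul_sr, inv_sr] using H.inv_mem hg
  · exact absurd hg (h b)

theorem coe_mul_comm_of_sr_mem {H K : Subgroup (DihedralGroup n)} {w v : ZMod n}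
    (hw : sr w ∈ H) (hv : sr v ∈ K) (hwv : 2 • w = 2 • v) :
    (H : Set (DihedralGroup n)) * K = K * H := by
  refine Subgroup.coe_mul_comm_of_subset ?_
  rintro _ ⟨h, hh, k, hk, rfl⟩
  rcases h with a | a <;> rcases k with b | b
  · exact ⟨r b, hk, r a, hh, by simp [r_mul_r, add_comm]⟩
  · exact ⟨sr b, hk, r (-a), by simpa [inv_r] using H.inv_mem hh,
      by simp [r_mul_sr, sr_mul_r]; abel⟩
  · exact ⟨r (-b), by simpa [inv_r] using K.inv_mem hk, sr a, hh, by simp [r_mul_sr, sr_mul_r]⟩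
  · -- `sr v * sr b * sr v = sr (2v - b)`, so for `2w = 2v` the product below is again `r (b - a)`
    refine ⟨sr v * sr b * sr v, K.mul_mem (K.mul_mem hv hk) hv,
      sr w * sr a * sr w, H.mul_mem (H.mul_mem hw hh) hw, ?_⟩
    simp only [sr_mul_sr, r_mul_sr, two_nsmul] at hwv ⊢
    congr 1
    linear_combination hwv

theorem coe_zpowers_sr_mul_ne {i j : ZMod n} (hij : 2 • i ≠ 2 • j) :
    (Subgroup.zpowers (sr i) : Set (DihedralGroup n)) * Subgroup.zpowers (sr j) ≠
      Subgroup.zpowers (sr j) * Subgroup.zpowers (sr i) := by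
  intro h
  have hmem : r (j - i) ∈ (Subgroup.zpowers (sr j) : Set (DihedralGroup n)) *
      Subgroup.zpowers (sr i) :=
    h ▸ ⟨sr i, Subgroup.mem_zpowers _, sr j, Subgroup.mem_zpowers _, sr_mul_sr i j⟩
  obtain ⟨x, hx, y, hy, hxy⟩ := hmem
  rw [SetLike.mem_coe, mem_zpowers_sr] at hx hy
  rcases hx with rfl | rfl <;> rcases hy with rfl | rfl <;>
    simp only [one_def, r_mul_r, sr_mul_sr, r_mul_sr, sr_mul_r, r.injEq, reduceCtorEq] at hxy
  · exact hij (by simp only [two_nsmul]; linear_combination 2 * hxy)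
  · exact hij (by simp only [two_nsmul]; linear_combination hxy)

theorem ncard_le_of_isIndepSet_permGraph [NeZero n]
    {s : Set {H : Subgroup (DihedralGroup n) // H ≠ ⊥ ∧ H ≠ ⊤}}
    (hs : IsIndepSet (permGraph (DihedralGroup n)) s) :
    s.ncard ≤ Nat.card (nsmulAddMonoidHom 2 : ZMod n →+ ZMod n).range := by
  rcases s.subsingleton_or_nontrivial with hsub | hnt
  · exact (Set.ncard_le_one_iff_subsingleton.mpr hsub).trans Nat.card_pos
  have hrefl (H : s) : ∃ i, sr i ∈ H.1.1 := by
    obtain ⟨K, hK, hKH⟩ := hnt.exists_ne H.1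
    exact exists_sr_mem_of_not_normal (hs.not_normal_of_permGraph H.2 hK hKH.symm)
  choose refl hrefl using hrefl
  let double (H : s) : (nsmulAddMonoidHom 2 : ZMod n →+ ZMod n).range :=
    ⟨2 • refl H, refl H, rfl⟩
  have hinj : Function.Injective double := by
    intro H K hHK
    by_contra hne
    have hne' : H.1 ≠ K.1 := Subtype.coe_injective.ne hne
    exact hs H.2 K.2 hne'
      ⟨hne', coe_mul_comm_of_sr_mem (hrefl H) (hrefl K) (congrArg Subtype.val hHK)⟩
  rw [← Nat.card_coe_set_eq]
  exact Nat.card_le_card_of_injective double hinj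

theorem exists_isIndepSet_permGraph_ncard_eq (hn : n ≠ 1) :
    ∃ s, IsIndepSet (permGraph (DihedralGroup n)) s ∧
      s.ncard = Nat.card (nsmulAddMonoidHom 2 : ZMod n →+ ZMod n).range := by
  choose half hhalf using fun y : (nsmulAddMonoidHom 2 : ZMod n →+ ZMod n).range => y.2
  let v (y : (nsmulAddMonoidHom 2 : ZMod n →+ ZMod n).range) :
      {H : Subgroup (DihedralGroup n) // H ≠ ⊥ ∧ H ≠ ⊤} :=
    ⟨Subgroup.zpowers (sr (half y)), zpowers_sr_ne_bot _, zpowers_sr_ne_top hn _⟩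
  have hnperm {y y'} (hne : y ≠ y') :
      ((v y).1 : Set (DihedralGroup n)) * (v y').1 ≠ (v y').1 * (v y).1 :=
    coe_zpowers_sr_mul_ne <| by
      rw [← nsmulAddMonoidHom_apply, hhalf, ← nsmulAddMonoidHom_apply, hhalf]
      exact Subtype.coe_injective.ne hne
  have hinj : Function.Injective v := by
    intro y y' h
    by_contra hne
    exact hnperm hne (by rw [h])
  refine ⟨Set.range v, ?_, Set.ncard_range_of_injective hinj⟩
  rintro _ ⟨y, rfl⟩ _ ⟨y', rfl⟩ hne ⟨-, hperm⟩
  exact hnperm (fun h => hne (congrArg v h)) hperm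

theorem indepNum_permGraph (hn : 2 ≤ n) :
    indepNum (permGraph (DihedralGroup n)) =
      Nat.card (nsmulAddMonoidHom 2 : ZMod n →+ ZMod n).range := by
  have : NeZero n := ⟨by omega⟩
  exact indepNum_eq_of_isIndepSet (exists_isIndepSet_permGraph_ncard_eq (by omega))
    fun _ hs => ncard_le_of_isIndepSet_permGraph hs

end DihedralGroup

/-- the independence number of `Γ(D_n)` is `n` for odd `n` and
`n/2` for even `n`. -/
theorem stmt_14 (n : ℕ) (hn : 3 ≤ n) :
    indepNum (permGraph (DihedralGroup n)) = if Odd n then n else n / 2 := by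
  have : NeZero n := ⟨by omega⟩
  rw [DihedralGroup.indepNum_permGraph (by omega), IsAddCyclic.card_nsmulAddMonoidHom_range,
    Nat.card_zmod, Nat.div_gcd_two]
end

section
/- Let n ≥ 3 be an integer. The permutability graph of subgroups Γ(D_n) of the dihedral group D_n is a split graph (its vertex set can be partitioned into a clique and an independent set) if and only if n is an odd prime. -/
open scoped Pointwise

/-- A split graph: the vertex set can be partitioned into a clique and an
independent set. -/
def IsSplitGraph {V : Type*} (G : SimpleGraph V) : Prop :=
  ∃ s : Set V, G.IsClique s ∧ sᶜ.Pairwise fun u v => ¬ G.Adj u v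

open Subgroup DihedralGroup

namespace PermAux

variable {n : ℕ}

theorem sr_ne_one (i : ZMod n) : (sr i : DihedralGroup n) ≠ 1 := by
  rw [one_def]; exact fun h => by cases h

theorem r_inv (a : ZMod n) : (r a : DihedralGroup n)⁻¹ = r (-a) := rfl

theorem r_one_zpow (z : ℤ) : (r 1 : DihedralGroup n) ^ z = r (z : ZMod n) := by
  cases z with
  | ofNat m => rw [Int.ofNat_eq_coe, zpow_natCast, r_one_pow]; norm_cast
  | negSucc m =>
      rw [zpow_negSucc, r_one_pow, r_inv, Int.cast_negSucc]

theorem mem_zpowers_r_one [NeZero n] (x : DihedralGroup n) :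
    x ∈ zpowers (r 1) ↔ ∃ k : ZMod n, x = r k := by
  rw [mem_zpowers_iff]
  constructor
  · rintro ⟨z, rfl⟩; exact ⟨z, by rw [r_one_zpow]⟩
  · rintro ⟨k, rfl⟩
    refine ⟨(k.val : ℤ), ?_⟩
    rw [r_one_zpow]
    push_cast
    rw [ZMod.natCast_zmod_val]

theorem mem_zpowers_sr (i : ZMod n) (x : DihedralGroup n) :
    x ∈ zpowers (sr i) ↔ x = 1 ∨ x = sr i := by
  constructor
  · rw [mem_zpowers_iff]
    rintro ⟨z, rfl⟩
    have h2 : (sr i : DihedralGroup n) ^ (2 : ℤ) = 1 := by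
      rw [zpow_two, sr_mul_self]
    rcases Int.even_or_odd z with ⟨m, hm⟩ | ⟨m, hm⟩
    · left; rw [hm, ← two_mul, zpow_mul, h2, one_zpow]
    · right; rw [hm, zpow_add, zpow_mul, h2, one_zpow, one_mul, zpow_one]
  · rintro (rfl | rfl)
    · exact one_mem _
    · exact mem_zpowers _

theorem coe_zpowers_sr (i : ZMod n) :
    ((zpowers (sr i) : Subgroup (DihedralGroup n)) : Set (DihedralGroup n)) = {1, sr i} := by
  ext x
  rw [SetLike.mem_coe, mem_zpowers_sr]
  simp [Set.mem_insert_iff]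

theorem commute_coe_mul_comm {G : Type*} [Group G] {g h : G}
    (hc : Commute g h) :
    ((zpowers g : Subgroup G) : Set G) * ((zpowers h : Subgroup G) : Set G)
      = ((zpowers h : Subgroup G) : Set G) * ((zpowers g : Subgroup G) : Set G) := by
  ext x
  simp only [Set.mem_mul, SetLike.mem_coe, mem_zpowers_iff]
  constructor
  · rintro ⟨a, ⟨m, rfl⟩, b, ⟨k, rfl⟩, rfl⟩
    exact ⟨h ^ k, ⟨k, rfl⟩, g ^ m, ⟨m, rfl⟩, ((hc.zpow_zpow m k).eq).symm⟩
  · rintro ⟨a, ⟨m, rfl⟩, b, ⟨k, rfl⟩, rfl⟩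
    exact ⟨g ^ k, ⟨k, rfl⟩, h ^ m, ⟨m, rfl⟩, ((hc.zpow_zpow k m).eq)⟩

theorem coe_mul_of_le {G : Type*} [Group G] {H K : Subgroup G} (h : H ≤ K) :
    (H : Set G) * (K : Set G) = (K : Set G) := by
  ext x
  simp only [Set.mem_mul, SetLike.mem_coe]
  constructor
  · rintro ⟨a, ha, b, hb, rfl⟩; exact K.mul_mem (h ha) hb
  · intro hx; exact ⟨1, H.one_mem, x, hx, one_mul x⟩

theorem coe_mul_of_le' {G : Type*} [Group G] {H K : Subgroup G} (h : H ≤ K) :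
    (K : Set G) * (H : Set G) = (K : Set G) := by
  ext x
  simp only [Set.mem_mul, SetLike.mem_coe]
  constructor
  · rintro ⟨a, ha, b, hb, rfl⟩; exact K.mul_mem ha (h hb)
  · intro hx; exact ⟨x, hx, 1, H.one_mem, mul_one x⟩

theorem perm_of_le {G : Type*} [Group G] {H K : Subgroup G} (h : H ≤ K) :
    (H : Set G) * (K : Set G) = (K : Set G) * (H : Set G) := by
  rw [coe_mul_of_le h, coe_mul_of_le' h]


theorem sr_perm_iff {i j : ZMod n} (hij : i ≠ j) :
    ((zpowers (sr i) : Subgroup (DihedralGroup n)) : Set (DihedralGroup n)) *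
      ((zpowers (sr j) : Subgroup (DihedralGroup n)) : Set (DihedralGroup n)) =
    ((zpowers (sr j) : Subgroup (DihedralGroup n)) : Set (DihedralGroup n)) *
      ((zpowers (sr i) : Subgroup (DihedralGroup n)) : Set (DihedralGroup n)) ↔
    i - j = j - i := by
  constructor
  · intro h
    have hmem : (r (j - i) : DihedralGroup n) ∈
        ((zpowers (sr i) : Subgroup (DihedralGroup n)) : Set (DihedralGroup n)) *
        ((zpowers (sr j) : Subgroup (DihedralGroup n)) : Set (DihedralGroup n)) := by
      rw [coe_zpowers_sr, coe_zpowers_sr]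
      exact ⟨sr i, by simp, sr j, by simp, sr_mul_sr i j⟩
    rw [h, coe_zpowers_sr, coe_zpowers_sr] at hmem
    obtain ⟨a, ha, b, hb, hab⟩ := hmem
    simp only [Set.mem_insert_iff, Set.mem_singleton_iff] at ha hb
    dsimp only at hab
    rcases ha with rfl | rfl <;> rcases hb with rfl | rfl
    · rw [one_mul, one_def] at hab
      injection hab with h0
      exact absurd (sub_eq_zero.mp h0.symm).symm hij
    · rw [one_mul] at hab; cases hab
    · rw [mul_one] at hab; cases hab
    · rw [sr_mul_sr] at hab
      exact DihedralGroup.r.inj hab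
  · intro h
    refine commute_coe_mul_comm ?_
    rw [Commute, SemiconjBy, sr_mul_sr, sr_mul_sr, h]

theorem r_pow (a : ZMod n) (m : ℕ) : (r a : DihedralGroup n) ^ m = r ((m : ZMod n) * a) := by
  induction m with
  | zero => rw [pow_zero, one_def]; norm_num
  | succ k ih =>
      rw [pow_succ, ih, r_mul_r]
      congr 1
      push_cast
      ring

theorem r_mem_of_r_mem [Fact (Nat.Prime n)] {H : Subgroup (DihedralGroup n)} {k : ZMod n}
    (hk : k ≠ 0) (hmem : r k ∈ H) (t : ZMod n) : r t ∈ H := by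
  haveI : NeZero n := ⟨(Fact.out : Nat.Prime n).ne_zero⟩
  have h := H.pow_mem hmem (t * k⁻¹).val
  rw [r_pow, ZMod.natCast_zmod_val] at h
  have hkt : t * k⁻¹ * k = t := by
    rw [mul_assoc, inv_mul_cancel₀ hk, mul_one]
  rwa [hkt] at h

theorem classify [Fact (Nat.Prime n)] (H : Subgroup (DihedralGroup n)) (hb : H ≠ ⊥)
    (ht : H ≠ ⊤) : H = zpowers (r 1) ∨ ∃ i, H = zpowers (sr i) := by
  haveI : NeZero n := ⟨(Fact.out : Nat.Prime n).ne_zero⟩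
  by_cases hs : ∃ i, sr i ∈ H
  · obtain ⟨i, hi⟩ := hs
    by_cases hr : ∃ k, k ≠ 0 ∧ r k ∈ H
    · exfalso
      obtain ⟨k, hk0, hk⟩ := hr
      apply ht
      rw [Subgroup.eq_top_iff']
      intro x
      cases x with
      | r t => exact r_mem_of_r_mem hk0 hk t
      | sr t =>
          have := H.mul_mem hi (r_mem_of_r_mem hk0 hk (t - i))
          rwa [sr_mul_r, add_sub_cancel] at this
    · push_neg at hr
      right
      refine ⟨i, le_antisymm ?_ ((zpowers_le).mpr hi)⟩
      intro x hx
      rw [mem_zpowers_sr]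
      cases x with
      | r t =>
          by_cases ht0 : t = 0
          · left; rw [ht0, one_def]
          · exact absurd hx (hr t ht0)
      | sr t =>
          right
          have := H.mul_mem hi hx
          rw [sr_mul_sr] at this
          by_cases htt : t - i = 0
          · rw [sub_eq_zero.mp htt]
          · exact absurd this (hr _ htt)
  · push_neg at hs
    by_cases hr : ∃ k, k ≠ 0 ∧ r k ∈ H
    · left
      obtain ⟨k, hk0, hk⟩ := hr
      refine le_antisymm ?_ ((zpowers_le).mpr (r_mem_of_r_mem hk0 hk 1))
      intro x hx
      cases x with
      | r t => rw [mem_zpowers_r_one]; exact ⟨t, rfl⟩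
      | sr t => exact absurd hx (hs t)
    · exfalso
      push_neg at hr
      apply hb
      rw [eq_bot_iff]
      intro x hx
      rw [Subgroup.mem_bot]
      cases x with
      | r t =>
          by_cases ht0 : t = 0
          · rw [ht0, one_def]
          · exact absurd hx (hr t ht0)
      | sr t => exact absurd hx (hs t)

def castHomD {d : ℕ} (hd : d ∣ n) : DihedralGroup n →* DihedralGroup d where
  toFun x := match x with
    | r i => r (ZMod.castHom hd (ZMod d) i)
    | sr i => sr (ZMod.castHom hd (ZMod d) i)
  map_one' := by
    show r (ZMod.castHom hd (ZMod d) 0) = 1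
    rw [map_zero, one_def]
  map_mul' := by
    rintro (a | a) (b | b)
    · show r (ZMod.castHom hd (ZMod d) (a + b)) = r _ * r _
      rw [r_mul_r, map_add]
    · show sr (ZMod.castHom hd (ZMod d) (b - a)) = r _ * sr _
      rw [r_mul_sr, map_sub]
    · show sr (ZMod.castHom hd (ZMod d) (a + b)) = sr _ * r _
      rw [sr_mul_r, map_add]
    · show r (ZMod.castHom hd (ZMod d) (b - a)) = sr _ * sr _
      rw [sr_mul_sr, map_sub]

@[simp] theorem castHomD_r {d : ℕ} (hd : d ∣ n) (i : ZMod n) :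
    castHomD hd (r i) = r (ZMod.castHom hd (ZMod d) i) := rfl

@[simp] theorem castHomD_sr {d : ℕ} (hd : d ∣ n) (i : ZMod n) :
    castHomD hd (sr i) = sr (ZMod.castHom hd (ZMod d) i) := rfl

end PermAux

section MoreAux

open DihedralGroup Subgroup PermAux

variable {n : ℕ}

theorem PermAux.S_ne_bot (i : ZMod n) :
    (zpowers (sr i) : Subgroup (DihedralGroup n)) ≠ ⊥ := by
  intro h
  have hm := mem_zpowers (sr i : DihedralGroup n)
  rw [h, Subgroup.mem_bot] at hm
  exact sr_ne_one i hm

theorem PermAux.S_ne_top [Fact (1 < n)] (i : ZMod n) :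
    (zpowers (sr i) : Subgroup (DihedralGroup n)) ≠ ⊤ := by
  intro h
  have hm : (r 1 : DihedralGroup n) ∈ zpowers (sr i) := by
    rw [h]; trivial
  rw [mem_zpowers_sr] at hm
  rcases hm with hm | hm
  · rw [one_def] at hm
    exact one_ne_zero (DihedralGroup.r.inj hm)
  · cases hm

/-- The vertex of the permutability graph given by the subgroup `⟨sr i⟩`. -/
def PermAux.Sv (n : ℕ) [Fact (1 < n)] (i : ZMod n) :
    {H : Subgroup (DihedralGroup n) // H ≠ ⊥ ∧ H ≠ ⊤} :=
  ⟨zpowers (sr i), PermAux.S_ne_bot i, PermAux.S_ne_top i⟩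

theorem PermAux.sr_notMem_zpowers_sr {i j : ZMod n} (hij : i ≠ j) :
    (sr i : DihedralGroup n) ∉ zpowers (sr j) := by
  rw [mem_zpowers_sr]
  rintro (h | h)
  · exact sr_ne_one i h
  · exact hij (DihedralGroup.sr.inj h)

theorem PermAux.Sv_ne [Fact (1 < n)] {i j : ZMod n} (hij : i ≠ j) :
    PermAux.Sv n i ≠ PermAux.Sv n j := by
  intro h
  have h' : (zpowers (sr i) : Subgroup (DihedralGroup n)) = zpowers (sr j) :=
    congrArg Subtype.val h
  exact PermAux.sr_notMem_zpowers_sr hij (h' ▸ mem_zpowers (sr i))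

theorem PermAux.Sv_nonadj [Fact (1 < n)] {i j : ZMod n} (hij : i ≠ j)
    (h : i - j ≠ j - i) :
    ¬ (permGraph (DihedralGroup n)).Adj (PermAux.Sv n i) (PermAux.Sv n j) := by
  rintro ⟨-, hs⟩
  exact h ((sr_perm_iff hij).mp hs)

theorem PermAux.Sv_adj [Fact (1 < n)] {i j : ZMod n} (hij : i ≠ j)
    (h : i - j = j - i) :
    (permGraph (DihedralGroup n)).Adj (PermAux.Sv n i) (PermAux.Sv n j) :=
  ⟨PermAux.Sv_ne hij, (sr_perm_iff hij).mpr h⟩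

theorem PermAux.natCast_inj_lt {a b : ℕ} (ha : a < n) (hb : b < n)
    (h : (a : ZMod n) = (b : ZMod n)) : a = b := by
  haveI : NeZero n := ⟨by omega⟩
  have h2 := congrArg ZMod.val h
  rwa [ZMod.val_cast_of_lt ha, ZMod.val_cast_of_lt hb] at h2

theorem PermAux.not_split {V : Type*} {G : SimpleGraph V} {u1 v1 u2 v2 : V}
    (e1 : G.Adj u1 v1) (e2 : G.Adj u2 v2)
    (h : ∀ x, (x = u1 ∨ x = v1) → ∀ y, (y = u2 ∨ y = v2) → x ≠ y ∧ ¬ G.Adj x y) :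
    ¬ IsSplitGraph G := by
  rintro ⟨s, hc, hi⟩
  have h1 : u1 ∈ s ∨ v1 ∈ s := by
    by_contra hco
    push_neg at hco
    exact hi hco.1 hco.2 e1.ne e1
  have h2 : u2 ∈ s ∨ v2 ∈ s := by
    by_contra hco
    push_neg at hco
    exact hi hco.1 hco.2 e2.ne e2
  obtain ⟨x, hx, hx1⟩ : ∃ x ∈ s, x = u1 ∨ x = v1 := by
    rcases h1 with h' | h'
    exacts [⟨u1, h', Or.inl rfl⟩, ⟨v1, h', Or.inr rfl⟩]
  obtain ⟨y, hy, hy1⟩ : ∃ y ∈ s, y = u2 ∨ y = v2 := by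
    rcases h2 with h' | h'
    exacts [⟨u2, h', Or.inl rfl⟩, ⟨v2, h', Or.inr rfl⟩]
  obtain ⟨hne, hnadj⟩ := h x hx1 y hy1
  exact hnadj (hc hx hy hne)

end MoreAux

section HsubAux

open DihedralGroup Subgroup PermAux

variable {n d : ℕ}

/-- Preimage in `DihedralGroup n` of the subgroup `⟨sr c⟩` of `DihedralGroup d`. -/
def PermAux.Hsub (hd : d ∣ n) (c : ZMod d) : Subgroup (DihedralGroup n) :=
  Subgroup.comap (castHomD hd) (zpowers (sr c))

theorem PermAux.r_mem_Hsub {hd : d ∣ n} {c : ZMod d} {i : ZMod n} :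
    r i ∈ PermAux.Hsub hd c ↔ ZMod.castHom hd (ZMod d) i = 0 := by
  rw [PermAux.Hsub, Subgroup.mem_comap, castHomD_r, mem_zpowers_sr, one_def]
  constructor
  · rintro (h | h)
    · exact DihedralGroup.r.inj h
    · cases h
  · intro h
    left; rw [h]

theorem PermAux.sr_mem_Hsub {hd : d ∣ n} {c : ZMod d} {i : ZMod n} :
    sr i ∈ PermAux.Hsub hd c ↔ ZMod.castHom hd (ZMod d) i = c := by
  rw [PermAux.Hsub, Subgroup.mem_comap, castHomD_sr, mem_zpowers_sr, one_def]
  constructor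
  · rintro (h | h)
    · cases h
    · exact DihedralGroup.sr.inj h
  · intro h
    right; rw [h]

variable (hd : d ∣ n) [Fact (1 < d)]

theorem PermAux.Hsub_ne_bot (c : ZMod d) (i : ZMod n)
    (hi : ZMod.castHom hd (ZMod d) i = c) : PermAux.Hsub hd c ≠ ⊥ := by
  intro h
  have hm : sr i ∈ PermAux.Hsub hd c := PermAux.sr_mem_Hsub.mpr hi
  rw [h, Subgroup.mem_bot] at hm
  exact sr_ne_one i hm

theorem PermAux.Hsub_ne_top (c : ZMod d) (i : ZMod n)
    (hi : ZMod.castHom hd (ZMod d) i ≠ c) : PermAux.Hsub hd c ≠ ⊤ := by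
  intro h
  exact hi (PermAux.sr_mem_Hsub.mp (h ▸ Subgroup.mem_top (sr i)))

theorem PermAux.S0_H2_nonperm (h2d : (2 : ZMod d) ≠ 0) :
    ((zpowers (sr (0 : ZMod n)) : Subgroup (DihedralGroup n)) : Set (DihedralGroup n)) *
      ((PermAux.Hsub hd 1 : Subgroup (DihedralGroup n)) : Set (DihedralGroup n)) ≠
    ((PermAux.Hsub hd 1 : Subgroup (DihedralGroup n)) : Set (DihedralGroup n)) *
      ((zpowers (sr (0 : ZMod n)) : Subgroup (DihedralGroup n)) : Set (DihedralGroup n)) := by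
  intro h
  have hmem : (r 1 : DihedralGroup n) ∈
      ((zpowers (sr (0 : ZMod n)) : Subgroup (DihedralGroup n)) : Set (DihedralGroup n)) *
      ((PermAux.Hsub hd 1 : Subgroup (DihedralGroup n)) : Set (DihedralGroup n)) := by
    refine ⟨sr 0, mem_zpowers _, sr 1, PermAux.sr_mem_Hsub.mpr (map_one _), ?_⟩
    show (sr 0 : DihedralGroup n) * sr 1 = r 1
    rw [sr_mul_sr, sub_zero]
  rw [h] at hmem
  obtain ⟨x, hx, y, hy, hxy⟩ := hmem
  dsimp only at hxy
  rw [SetLike.mem_coe, mem_zpowers_sr] at hy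
  rcases hy with rfl | rfl
  · rw [mul_one] at hxy
    subst hxy
    rw [SetLike.mem_coe, PermAux.r_mem_Hsub, map_one] at hx
    exact one_ne_zero hx
  · cases x with
    | r a => rw [r_mul_sr] at hxy; cases hxy
    | sr a =>
        rw [sr_mul_sr] at hxy
        have ha : (0 : ZMod n) - a = 1 := DihedralGroup.r.inj hxy
        have ha' : a = -1 := by linear_combination -ha
        rw [SetLike.mem_coe, PermAux.sr_mem_Hsub, ha', map_neg, map_one] at hx
        exact h2d (by linear_combination -hx)

theorem PermAux.H1_S1_nonperm (h2d : (2 : ZMod d) ≠ 0) :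
    ((PermAux.Hsub hd 0 : Subgroup (DihedralGroup n)) : Set (DihedralGroup n)) *
      ((zpowers (sr (1 : ZMod n)) : Subgroup (DihedralGroup n)) : Set (DihedralGroup n)) ≠
    ((zpowers (sr (1 : ZMod n)) : Subgroup (DihedralGroup n)) : Set (DihedralGroup n)) *
      ((PermAux.Hsub hd 0 : Subgroup (DihedralGroup n)) : Set (DihedralGroup n)) := by
  intro h
  have hmem : (r 1 : DihedralGroup n) ∈
      ((PermAux.Hsub hd 0 : Subgroup (DihedralGroup n)) : Set (DihedralGroup n)) *
      ((zpowers (sr (1 : ZMod n)) : Subgroup (DihedralGroup n)) : Set (DihedralGroup n)) := by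
    refine ⟨sr 0, PermAux.sr_mem_Hsub.mpr (map_zero _), sr 1, mem_zpowers _, ?_⟩
    show (sr 0 : DihedralGroup n) * sr 1 = r 1
    rw [sr_mul_sr, sub_zero]
  rw [h] at hmem
  obtain ⟨x, hx, y, hy, hxy⟩ := hmem
  dsimp only at hxy
  rw [SetLike.mem_coe, mem_zpowers_sr] at hx
  rcases hx with rfl | rfl
  · rw [one_mul] at hxy
    subst hxy
    rw [SetLike.mem_coe, PermAux.r_mem_Hsub, map_one] at hy
    exact one_ne_zero hy
  · cases y with
    | r a => rw [sr_mul_r] at hxy; cases hxy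
    | sr a =>
        rw [sr_mul_sr] at hxy
        have ha : a - 1 = 1 := DihedralGroup.r.inj hxy
        have ha' : a = 2 := by linear_combination ha
        rw [SetLike.mem_coe, PermAux.sr_mem_Hsub, ha'] at hy
        rw [map_ofNat] at hy
        exact h2d hy

theorem PermAux.H1_H2_nonperm (h2d : (2 : ZMod d) ≠ 0) :
    ((PermAux.Hsub hd 0 : Subgroup (DihedralGroup n)) : Set (DihedralGroup n)) *
      ((PermAux.Hsub hd 1 : Subgroup (DihedralGroup n)) : Set (DihedralGroup n)) ≠
    ((PermAux.Hsub hd 1 : Subgroup (DihedralGroup n)) : Set (DihedralGroup n)) *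
      ((PermAux.Hsub hd 0 : Subgroup (DihedralGroup n)) : Set (DihedralGroup n)) := by
  intro h
  have hmem : (r 1 : DihedralGroup n) ∈
      ((PermAux.Hsub hd 0 : Subgroup (DihedralGroup n)) : Set (DihedralGroup n)) *
      ((PermAux.Hsub hd 1 : Subgroup (DihedralGroup n)) : Set (DihedralGroup n)) := by
    refine ⟨sr 0, PermAux.sr_mem_Hsub.mpr (map_zero _), sr 1,
      PermAux.sr_mem_Hsub.mpr (map_one _), ?_⟩
    show (sr 0 : DihedralGroup n) * sr 1 = r 1
    rw [sr_mul_sr, sub_zero]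
  rw [h] at hmem
  obtain ⟨x, hx, y, hy, hxy⟩ := hmem
  dsimp only at hxy
  cases x with
  | r a =>
      cases y with
      | r b =>
          rw [r_mul_r] at hxy
          have hab : a + b = 1 := DihedralGroup.r.inj hxy
          rw [SetLike.mem_coe, PermAux.r_mem_Hsub] at hx hy
          have := congrArg (ZMod.castHom hd (ZMod d)) hab
          rw [map_add, map_one, hx, hy, add_zero] at this
          exact one_ne_zero this.symm
      | sr b => rw [r_mul_sr] at hxy; cases hxy
  | sr a =>
      cases y with
      | r b => rw [sr_mul_r] at hxy; cases hxy
      | sr b =>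
          rw [sr_mul_sr] at hxy
          have hab : b - a = 1 := DihedralGroup.r.inj hxy
          rw [SetLike.mem_coe, PermAux.sr_mem_Hsub] at hx hy
          have := congrArg (ZMod.castHom hd (ZMod d)) hab
          rw [map_sub, map_one, hx, hy] at this
          exact h2d (by linear_combination -this)

end HsubAux

/-- `Γ(D_n)` is a split graph iff `n` is an odd prime. -/
theorem stmt_15 (n : ℕ) (hn : 3 ≤ n) :
    IsSplitGraph (permGraph (DihedralGroup n)) ↔ (Odd n ∧ n.Prime) := by
  haveI : NeZero n := ⟨by omega⟩
  haveI : Fact (1 < n) := ⟨by omega⟩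
  have h2n : (2 : ZMod n) ≠ 0 := by
    have h' : ((2 : ℕ) : ZMod n) ≠ 0 := by
      rw [Ne, ZMod.natCast_eq_zero_iff]
      intro hdvd
      have := Nat.le_of_dvd (by norm_num) hdvd
      omega
    simpa using h'
  have h01n : (0 : ZMod n) ≠ 1 := fun h => one_ne_zero h.symm
  constructor
  · intro hsplit
    by_contra hcon
    rcases Nat.even_or_odd n with he | ho
    · -- n even : induced 2K2 among four reflection subgroups
      obtain ⟨m, hm⟩ := he
      have hm2 : 2 ≤ m := by omega
      have hM0 : (m : ZMod n) + (m : ZMod n) = 0 := by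
        rw [← Nat.cast_add, ← hm, ZMod.natCast_self]
      have hcast : ∀ a b : ℕ, a < n → b < n → a ≠ b → ((a : ZMod n) ≠ (b : ZMod n)) := by
        intro a b ha hb hab h
        exact hab (PermAux.natCast_inj_lt ha hb h)
      have ne0M : (0 : ZMod n) ≠ (m : ZMod n) := by
        have := hcast 0 m (by omega) (by omega) (by omega)
        simpa using this
      have ne1M1 : (1 : ZMod n) ≠ (m : ZMod n) + 1 := by
        have := hcast 1 (m + 1) (by omega) (by omega) (by omega)
        intro h
        apply this
        push_cast
        exact h
      have ne01 : (0 : ZMod n) ≠ (1 : ZMod n) := h01n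
      have ne0M1 : (0 : ZMod n) ≠ (m : ZMod n) + 1 := by
        have := hcast 0 (m + 1) (by omega) (by omega) (by omega)
        intro h
        apply this
        push_cast
        exact h
      have neM1' : (m : ZMod n) ≠ (1 : ZMod n) := by
        have := hcast m 1 (by omega) (by omega) (by omega)
        simpa using this
      have neMM1 : (m : ZMod n) ≠ (m : ZMod n) + 1 := by
        intro h
        exact h01n (by linear_combination h)
      have adj1 : (0 : ZMod n) - (m : ZMod n) = (m : ZMod n) - 0 := by
        linear_combination -hM0
      have adj2 : (1 : ZMod n) - ((m : ZMod n) + 1) = ((m : ZMod n) + 1) - 1 := by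
        linear_combination -hM0
      refine PermAux.not_split (PermAux.Sv_adj ne0M adj1) (PermAux.Sv_adj ne1M1 adj2)
        ?_ hsplit
      rintro x (rfl | rfl) y (rfl | rfl)
      · refine ⟨PermAux.Sv_ne ne01, PermAux.Sv_nonadj ne01 ?_⟩
        intro h
        exact h2n (by linear_combination -h)
      · refine ⟨PermAux.Sv_ne ne0M1, PermAux.Sv_nonadj ne0M1 ?_⟩
        intro h
        exact h2n (by linear_combination -h - hM0)
      · refine ⟨PermAux.Sv_ne neM1', PermAux.Sv_nonadj neM1' ?_⟩
        intro h
        exact h2n (by linear_combination hM0 - h)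
      · refine ⟨PermAux.Sv_ne neMM1, PermAux.Sv_nonadj neMM1 ?_⟩
        intro h
        exact h2n (by linear_combination -h)
    · -- n odd, hence not prime : induced 2K2 with the subgroups Hsub
      have hnp : ¬ n.Prime := fun hp => hcon ⟨ho, hp⟩
      have hd : n.minFac ∣ n := n.minFac_dvd
      set d := n.minFac with hdd
      have hdp : d.Prime := Nat.minFac_prime (by omega)
      have hdne2 : d ≠ 2 := by
        intro h
        rw [h] at hd
        obtain ⟨k, hk⟩ := hd
        obtain ⟨l, hl⟩ := ho
        omega
      have hd3 : 3 ≤ d := by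
        have := hdp.two_le
        omega
      have hdn : d < n := by
        rcases (Nat.le_of_dvd (by omega) hd).lt_or_eq with h | h
        · exact h
        · exact absurd (h ▸ hdp) hnp
      haveI : Fact (1 < d) := ⟨by omega⟩
      have h2d : (2 : ZMod d) ≠ 0 := by
        have h' : ((2 : ℕ) : ZMod d) ≠ 0 := by
          rw [Ne, ZMod.natCast_eq_zero_iff]
          intro hdvd
          have := Nat.le_of_dvd (by norm_num) hdvd
          omega
        simpa using h'
      have h01d : (0 : ZMod d) ≠ 1 := fun h => one_ne_zero h.symm
      have φ0 : ZMod.castHom hd (ZMod d) 0 = 0 := map_zero _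
      have φ1 : ZMod.castHom hd (ZMod d) 1 = 1 := map_one _
      have φd : ZMod.castHom hd (ZMod d) ((d : ℕ) : ZMod n) = 0 := by
        rw [map_natCast]
        exact ZMod.natCast_self d
      have hrd_ne : ((d : ℕ) : ZMod n) ≠ 0 := by
        intro h
        have hh : ((d : ℕ) : ZMod n) = ((0 : ℕ) : ZMod n) := by simpa using h
        have := PermAux.natCast_inj_lt hdn (by omega) hh
        omega
      have hrd_notmem : ∀ i : ZMod n, (r ((d : ℕ) : ZMod n) : DihedralGroup n) ∉
          zpowers (sr i) := by
        intro i h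
        rw [PermAux.mem_zpowers_sr] at h
        rcases h with h | h
        · rw [one_def] at h
          exact hrd_ne (DihedralGroup.r.inj h)
        · cases h
      -- the four vertices
      refine PermAux.not_split (G := permGraph (DihedralGroup n))
        (u1 := PermAux.Sv n 0)
        (v1 := ⟨PermAux.Hsub hd 0, PermAux.Hsub_ne_bot hd 0 0 φ0,
          PermAux.Hsub_ne_top hd 0 1 (by rw [φ1]; exact fun h => h01d h.symm)⟩)
        (u2 := PermAux.Sv n 1)
        (v2 := ⟨PermAux.Hsub hd 1, PermAux.Hsub_ne_bot hd 1 1 φ1,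
          PermAux.Hsub_ne_top hd 1 0 (by rw [φ0]; exact h01d)⟩)
        ?_ ?_ ?_ hsplit
      · refine ⟨?_, PermAux.perm_of_le (zpowers_le.mpr (PermAux.sr_mem_Hsub.mpr φ0))⟩
        intro h
        have h' : (zpowers (sr (0 : ZMod n)) : Subgroup (DihedralGroup n)) =
            PermAux.Hsub hd 0 := congrArg Subtype.val h
        exact hrd_notmem 0 (h' ▸ PermAux.r_mem_Hsub.mpr φd)
      · refine ⟨?_, PermAux.perm_of_le (zpowers_le.mpr (PermAux.sr_mem_Hsub.mpr φ1))⟩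
        intro h
        have h' : (zpowers (sr (1 : ZMod n)) : Subgroup (DihedralGroup n)) =
            PermAux.Hsub hd 1 := congrArg Subtype.val h
        exact hrd_notmem 1 (h' ▸ PermAux.r_mem_Hsub.mpr φd)
      · rintro x (rfl | rfl) y (rfl | rfl)
        · refine ⟨PermAux.Sv_ne h01n, PermAux.Sv_nonadj h01n ?_⟩
          intro h
          exact h2n (by linear_combination -h)
        · constructor
          · intro h
            have h' : (zpowers (sr (0 : ZMod n)) : Subgroup (DihedralGroup n)) =
                PermAux.Hsub hd 1 := congrArg Subtype.val h
            exact PermAux.sr_notMem_zpowers_sr (fun hh => h01n hh.symm)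
              (h' ▸ PermAux.sr_mem_Hsub.mpr φ1)
          · rintro ⟨-, hs⟩
            exact PermAux.S0_H2_nonperm hd h2d hs
        · constructor
          · intro h
            have h' : (PermAux.Hsub hd 0 : Subgroup (DihedralGroup n)) =
                zpowers (sr (1 : ZMod n)) := congrArg Subtype.val h
            exact PermAux.sr_notMem_zpowers_sr h01n
              (h' ▸ PermAux.sr_mem_Hsub.mpr φ0)
          · rintro ⟨-, hs⟩
            exact PermAux.H1_S1_nonperm hd h2d hs
        · constructor
          · intro h
            have h' : (PermAux.Hsub hd 0 : Subgroup (DihedralGroup n)) =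
                PermAux.Hsub hd 1 := congrArg Subtype.val h
            have := PermAux.sr_mem_Hsub.mp (h' ▸ PermAux.sr_mem_Hsub.mpr φ0)
            rw [φ0] at this
            exact h01d this
          · rintro ⟨-, hs⟩
            exact PermAux.H1_H2_nonperm hd h2d hs
  · rintro ⟨hodd, hp⟩
    haveI : Fact n.Prime := ⟨hp⟩
    have hRb : (zpowers (r (1 : ZMod n)) : Subgroup (DihedralGroup n)) ≠ ⊥ := by
      intro h
      have hm := mem_zpowers (r (1 : ZMod n) : DihedralGroup n)
      rw [h, Subgroup.mem_bot, one_def] at hm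
      exact one_ne_zero (DihedralGroup.r.inj hm)
    have hRt : (zpowers (r (1 : ZMod n)) : Subgroup (DihedralGroup n)) ≠ ⊤ := by
      intro h
      have hm : (sr (0 : ZMod n) : DihedralGroup n) ∈ zpowers (r (1 : ZMod n)) := by
        rw [h]; trivial
      rw [PermAux.mem_zpowers_r_one] at hm
      obtain ⟨k, hk⟩ := hm
      cases hk
    refine ⟨{⟨zpowers (r (1 : ZMod n)), hRb, hRt⟩}, ?_, ?_⟩
    · rw [SimpleGraph.isClique_iff]
      exact Set.pairwise_singleton _ _
    · intro u hu v hv huv hadj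
      rw [Set.mem_compl_iff, Set.mem_singleton_iff] at hu hv
      have hu' : u.1 ≠ zpowers (r (1 : ZMod n)) := by
        intro h
        exact hu (Subtype.ext h)
      have hv' : v.1 ≠ zpowers (r (1 : ZMod n)) := by
        intro h
        exact hv (Subtype.ext h)
      obtain ⟨i, hi⟩ := (PermAux.classify u.1 u.2.1 u.2.2).resolve_left hu'
      obtain ⟨j, hj⟩ := (PermAux.classify v.1 v.2.1 v.2.2).resolve_left hv'
      have hij : i ≠ j := by
        rintro rfl
        exact huv (Subtype.ext (hi.trans hj.symm))
      obtain ⟨-, hsets⟩ := hadj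
      rw [hi, hj] at hsets
      have hsub := (PermAux.sr_perm_iff hij).mp hsets
      have h2 : (2 : ZMod n) * (i - j) = 0 := by linear_combination hsub
      rcases mul_eq_zero.mp h2 with h' | h'
      · exact h2n h'
      · exact hij (sub_eq_zero.mp h')
end

section
/- Let n ≥ 3 be an integer. Then the permutability graph of non-normal subgroups Γ_N(Q_n) of the generalized quaternion group Q_n is isomorphic (as a simple graph) to the permutability graph of non-normal subgroups Γ_N(D_n) of the dihedral group D_n. -/
/-!
The map `Q_n → D_n` sending `a ↦ r` and `xa i ↦ sr i` is a surjective homomorphism with kernel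
`{1, a n}`. A subgroup of `Q_n` inside the cyclic subgroup `⟨a 1⟩` is normal, so a non-normal
subgroup contains some `xa i` and with it `(xa i)² = a n`, hence the kernel. By the correspondence
theorem, `map` and `comap` are then inverse bijections between the non-normal subgroups of `Q_n`
and of `D_n`, and they preserve permutability because `HK` is the full preimage of `f(H) f(K)`
as soon as `K` contains the kernel.
-/

open scoped Pointwise

namespace MonoidHom

variable {G G' : Type*} [Group G] [Group G'] (f : G →* G')

theorem preimage_image_mul_of_ker_le (s : Set G) {K : Subgroup G} (hK : f.ker ≤ K) :
    f ⁻¹' (f '' (s * K)) = s * K := by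
  refine Set.Subset.antisymm ?_ (Set.subset_preimage_image _ _)
  rintro x ⟨_, ⟨a, ha, b, hb, rfl⟩, hx⟩
  have hker : (a * b)⁻¹ * x ∈ f.ker := by rw [mem_ker, map_mul, map_inv, hx, inv_mul_cancel]
  exact ⟨a, ha, b * ((a * b)⁻¹ * x), K.mul_mem hb (hK hker), by group⟩

theorem image_mul_comm_iff {H K : Subgroup G} (hH : f.ker ≤ H) (hK : f.ker ≤ K) :
    f '' H * f '' K = f '' K * f '' H ↔ (H : Set G) * K = K * H := by
  rw [← Set.image_mul, ← Set.image_mul]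
  refine ⟨fun h => ?_, congrArg _⟩
  rw [← f.preimage_image_mul_of_ker_le _ hK, h, f.preimage_image_mul_of_ker_le _ hH]

end MonoidHom

namespace permGraphN

variable {G G' : Type*} [Group G] [Group G'] (f : G →* G') (hf : Function.Surjective f)
  (hker : ∀ H : Subgroup G, ¬ H.Normal → f.ker ≤ H)

def nonNormalEquivOfSurjective :
    {H : Subgroup G // ¬ H.Normal} ≃ {K : Subgroup G' // ¬ K.Normal} where
  toFun H := ⟨H.1.map f, fun h => H.2 (Subgroup.comap_map_eq_self (hker _ H.2) ▸ h.comap f)⟩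
  invFun K := ⟨K.1.comap f, fun h =>
    K.2 (Subgroup.map_comap_eq_self_of_surjective hf K.1 ▸ h.map f hf)⟩
  left_inv H := Subtype.ext (Subgroup.comap_map_eq_self (hker _ H.2))
  right_inv K := Subtype.ext (Subgroup.map_comap_eq_self_of_surjective hf K.1)

def isoOfSurjective : permGraphN G ≃g permGraphN G' where
  toEquiv := nonNormalEquivOfSurjective f hf hker
  map_rel_iff' {H K} := by
    refine and_congr (nonNormalEquivOfSurjective f hf hker).injective.ne_iff ?_
    simp only [nonNormalEquivOfSurjective, Equiv.coe_fn_mk, Subgroup.coe_map]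
    exact f.image_mul_comm_iff (hker _ H.2) (hker _ K.2)

end permGraphN

namespace ZMod

theorem eq_zero_or_eq_of_castHom_two_mul_eq_zero {n : ℕ} [NeZero n] {i : ZMod (2 * n)}
    (hi : ZMod.castHom (dvd_mul_left n 2) (ZMod n) i = 0) : i = 0 ∨ i = n := by
  rw [← ZMod.natCast_zmod_val i, map_natCast, ZMod.natCast_eq_zero_iff] at hi
  obtain ⟨c, hc⟩ := hi
  have hlt : n * c < n * 2 := by rw [← hc, mul_comm n 2]; exact ZMod.val_lt i
  have hc2 : c < 2 := Nat.lt_of_mul_lt_mul_left hlt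
  rw [← ZMod.natCast_zmod_val i, hc]
  interval_cases c <;> simp

end ZMod

namespace QuaternionGroup

variable (n : ℕ)

def toDihedralGroup : QuaternionGroup n →* DihedralGroup n :=
  MonoidHom.mk' (fun
      | a i => .r (ZMod.castHom (dvd_mul_left n 2) (ZMod n) i)
      | xa i => .sr (ZMod.castHom (dvd_mul_left n 2) (ZMod n) i)) <| by
    rintro (i | i) (j | j) <;>
      simp only [a_mul_a, a_mul_xa, xa_mul_a, xa_mul_xa, DihedralGroup.r_mul_r,
        DihedralGroup.r_mul_sr, DihedralGroup.sr_mul_r, DihedralGroup.sr_mul_sr, map_add,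
        map_sub, map_natCast, ZMod.natCast_self, zero_add]

theorem toDihedralGroup_surjective [NeZero n] : Function.Surjective (toDihedralGroup n) := by
  have hcast (j : ZMod n) : ZMod.castHom (dvd_mul_left n 2) (ZMod n) (j.val : ZMod (2 * n)) = j :=
    (map_natCast _ _).trans (ZMod.natCast_zmod_val j)
  rintro (j | j)
  · exact ⟨a j.val, congrArg _ (hcast j)⟩
  · exact ⟨xa j.val, congrArg _ (hcast j)⟩

theorem mem_ker_toDihedralGroup [NeZero n] {x : QuaternionGroup n} :
    x ∈ (toDihedralGroup n).ker ↔ x = 1 ∨ x = a n := by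
  refine ⟨fun hx => ?_, ?_⟩
  · rcases x with i | i
    · rcases ZMod.eq_zero_or_eq_of_castHom_two_mul_eq_zero (DihedralGroup.r.inj hx) with rfl | rfl
      exacts [Or.inl rfl, Or.inr rfl]
    · cases hx
  · rintro (rfl | rfl)
    · exact one_mem _
    · exact congrArg DihedralGroup.r ((map_natCast _ n).trans (ZMod.natCast_self n))

variable {n}

theorem conj_a_mem_zpowers (g : QuaternionGroup n) (i : ZMod (2 * n)) :
    g * a i * g⁻¹ ∈ Subgroup.zpowers (a i) := by
  rcases g with j | j
  · have : a j * a i * (a j)⁻¹ = a i := by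
      rw [show (a j)⁻¹ = a (-j) from rfl, a_mul_a, a_mul_a, add_neg_cancel_comm]
    rw [this]
    exact Subgroup.mem_zpowers _
  · have h2n : (n + n : ZMod (2 * n)) = 0 := by
      simpa [two_mul] using ZMod.natCast_self (2 * n)
    have : xa j * a i * (xa j)⁻¹ = (a i)⁻¹ := by
      rw [show (xa j)⁻¹ = xa ((n : ZMod (2 * n)) + j) from rfl, xa_mul_a, xa_mul_xa]
      exact congrArg a (by linear_combination h2n)
    rw [this]
    exact Subgroup.inv_mem _ (Subgroup.mem_zpowers _)

theorem a_n_mem_of_not_normal {H : Subgroup (QuaternionGroup n)} (hH : ¬ H.Normal) :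
    a n ∈ H := by
  by_contra han
  refine hH ⟨fun h hh g => ?_⟩
  rcases h with i | i
  · exact Subgroup.zpowers_le.mpr hh (conj_a_mem_zpowers g i)
  · exact absurd (xa_sq i ▸ H.pow_mem hh 2) han

end QuaternionGroup

/-- for `n ≥ 3`, the permutability graph of non-normal subgroups
of the generalized quaternion group `Q_n` is isomorphic to that of the dihedral
group `D_n`. -/
theorem stmt_19 (n : ℕ) (hn : 3 ≤ n) :
    Nonempty (permGraphN (QuaternionGroup n) ≃g permGraphN (DihedralGroup n)) := by
  have : NeZero n := ⟨by omega⟩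
  refine ⟨permGraphN.isoOfSurjective _ (QuaternionGroup.toDihedralGroup_surjective n)
    fun H hH x hx => ?_⟩
  rcases (QuaternionGroup.mem_ker_toDihedralGroup n).mp hx with rfl | rfl
  exacts [H.one_mem, QuaternionGroup.a_n_mem_of_not_normal hH]
end
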